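/- arXiv:1712.06196 — 7 statements merged into one kernel-verified Lean document; each statement's English description precedes it below -/
import Mathlib

section
/- The transpose of F has one-dimensional kernel spanned by the all-ones vector: Ker(F^⊤) = span{(1,…,1)^⊤}. -/
/-- The Maxwell–Stefan matrix `F` with entries `F i j = k i j * c i` for `j ≠ i`
and `F i i = -∑_{r ≠ i} k i r * c r`. The number of species is `m + 1` (so the
paper's `n` equals `m + 1`). -/
def MSmatF (m : ℕ) (k : Fin (m + 1) → Fin (m + 1) → ℝ)
    (c : Fin (m + 1) → ℝ) : Matrix (Fin (m + 1)) (Fin (m + 1)) ℝ :=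
  Matrix.of fun i j =>
    if i = j then -(∑ r ∈ Finset.univ.erase i, k i r * c r) else k i j * c i

/-!
By symmetry of `k`, the `i`-th entry of `Fᵀ v` is the weighted difference sum
`∑ⱼ k i j c j (v j - v i)`, so `Fᵀ` is a graph Laplacian with positive edge weights.
Constants are therefore in its kernel; conversely, at an index where `v` is maximal every
summand is `≤ 0`, so all of them vanish and positivity of the weights forces `v` to be
constant (a discrete maximum principle).
-/

open Finset Matrix

theorem eq_of_sum_mul_sub_eq_zero_of_forall_le {ι R : Type*} [Fintype ι] [Ring R]
    [LinearOrder R] [IsStrictOrderedRing R] {w v : ι → R} {i : ι}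
    (hw : ∀ j, j ≠ i → 0 < w j) (hmax : ∀ j, v j ≤ v i)
    (hsum : ∑ j, w j * (v j - v i) = 0) (j : ι) : v j = v i := by
  have hnonpos : ∀ j ∈ univ, w j * (v j - v i) ≤ 0 := by
    intro j _
    rcases eq_or_ne j i with rfl | hji
    · simp
    · exact mul_nonpos_of_nonneg_of_nonpos (hw j hji).le (sub_nonpos.mpr (hmax j))
  have hterm := (sum_eq_zero_iff_of_nonpos hnonpos).mp hsum j (mem_univ j)
  rcases eq_or_ne j i with rfl | hji
  · rfl
  · exact sub_eq_zero.mp ((mul_eq_zero.mp hterm).resolve_left (hw j hji).ne')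

theorem MSmatF_transpose_mulVec_apply (m : ℕ) {k : Fin (m + 1) → Fin (m + 1) → ℝ}
    (hsymm : ∀ i j, k i j = k j i) (c v : Fin (m + 1) → ℝ) (i : Fin (m + 1)) :
    ((MSmatF m k c)ᵀ *ᵥ v) i = ∑ j, k i j * c j * (v j - v i) := by
  have hoff : ∑ j ∈ univ.erase i, (MSmatF m k c) j i * v j
      = ∑ j ∈ univ.erase i, k i j * c j * v j :=
    sum_congr rfl fun j hj => by
      rw [MSmatF, of_apply, if_neg (mem_erase.mp hj).1, hsymm j i]
  rw [mulVec, dotProduct, ← add_sum_erase _ _ (mem_univ i),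
    ← add_sum_erase _ _ (mem_univ i)]
  simp only [transpose_apply, sub_self, mul_zero, zero_add, mul_sub, sum_sub_distrib, hoff]
  rw [MSmatF, of_apply, if_pos rfl, ← sum_mul]
  ring

theorem kernel_transpose_F_eq_span_ones_general
    (m : ℕ)
    (k : Fin (m + 1) → Fin (m + 1) → ℝ)
    (hsymm : ∀ i j, k i j = k j i)
    (hkpos : ∀ i j, i ≠ j → 0 < k i j)
    (c : Fin (m + 1) → ℝ)
    (hc : ∀ i, 0 < c i) :
    LinearMap.ker (Matrix.toLin' (MSmatF m k c).transpose)
      = Submodule.span ℝ {fun _ : Fin (m + 1) => (1 : ℝ)} := by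
  apply le_antisymm
  · intro v hv
    have hsum : ∀ i, ∑ j, k i j * c j * (v j - v i) = 0 := fun i => by
      rw [← MSmatF_transpose_mulVec_apply m hsymm c v i, ← Matrix.toLin'_apply,
        LinearMap.mem_ker.mp hv, Pi.zero_apply]
    obtain ⟨i, hmax⟩ := Finite.exists_max v
    have hconst := eq_of_sum_mul_sub_eq_zero_of_forall_le
      (fun j hji => mul_pos (hkpos i j hji.symm) (hc j)) hmax (hsum i)
    exact Submodule.mem_span_singleton.mpr ⟨v i, funext fun j => by simp [hconst j]⟩
  · rw [Submodule.span_le, Set.singleton_subset_iff, SetLike.mem_coe, LinearMap.mem_ker]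
    funext i
    simp [Matrix.toLin'_apply, MSmatF_transpose_mulVec_apply m hsymm]

/-- For `n = m + 1 ≥ 2` species, symmetric coefficients `k i j = k j i`
which are strictly positive off the diagonal, and strictly positive concentrations
`c i > 0`, the kernel of the transpose of `F` is the span of the all-ones vector. -/
theorem kernel_transpose_F_eq_span_ones
    (m : ℕ) (hm : 1 ≤ m)
    (k : Fin (m + 1) → Fin (m + 1) → ℝ)
    (hsymm : ∀ i j, k i j = k j i)
    (hkpos : ∀ i j, i ≠ j → 0 < k i j)
    (c : Fin (m + 1) → ℝ)
    (hc : ∀ i, 0 < c i) :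
    LinearMap.ker (Matrix.toLin' (MSmatF m k c).transpose)
      = Submodule.span ℝ {fun _ : Fin (m + 1) => (1 : ℝ)} :=
  kernel_transpose_F_eq_span_ones_general m k hsymm hkpos c hc
end

section
/- Every complex eigenvalue λ of the matrix −F is either equal to 0 or is real and satisfies δ ≤ λ < η; that is, the spectrum of −F is contained in {0} ∪ [δ, η). -/
open Finset Matrix ComplexConjugate
open Complex (normSq)

lemma Matrix.exists_vecMul_eq_smul_of_mem_spectrum {K n : Type*} [Field K] [Fintype n]
    [DecidableEq n] {A : Matrix n n K} {μ : K} (hμ : μ ∈ spectrum K A) :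
    ∃ w ≠ 0, w ᵥ* A = μ • w := by
  rw [mem_spectrum_iff_isRoot_charpoly, ← charpoly_transpose, ← mem_spectrum_iff_isRoot_charpoly,
    ← spectrum_toLin', ← Module.End.hasEigenvalue_iff_mem_spectrum] at hμ
  obtain ⟨w, hw, hw0⟩ := hμ.exists_hasEigenvector
  refine ⟨w, hw0, ?_⟩
  rw [← mulVec_transpose, ← toLin'_apply]
  exact Module.End.mem_eigenspace_iff.mp hw

lemma Matrix.exists_re_le_of_mem_spectrum_map_ofReal {n : Type*} [Fintype n] [DecidableEq n]
    {A : Matrix n n ℝ} {μ : ℂ} (hμ : μ ∈ spectrum ℂ (A.map Complex.ofReal)) :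
    ∃ i, μ.re ≤ A i i + ∑ j ∈ univ.erase i, |A i j| := by
  rw [← spectrum_toLin', ← Module.End.hasEigenvalue_iff_mem_spectrum] at hμ
  obtain ⟨i, hi⟩ := eigenvalue_mem_ball hμ
  refine ⟨i, ?_⟩
  rw [Metric.mem_closedBall, Complex.dist_eq] at hi
  simp only [Matrix.map_apply, Complex.norm_real, Real.norm_eq_abs] at hi
  have hre := Complex.re_le_norm (μ - A i i)
  rw [Complex.sub_re, Complex.ofReal_re] at hre
  linarith

section

variable {ι : Type*} [Fintype ι]

lemma Finset.sum_sum_add_sum_sum_comm {M : Type*} [AddCommMonoid M] (f : ι → ι → M) :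
    ∑ i, ∑ j, f i j + ∑ i, ∑ j, f i j = ∑ i, ∑ j, (f i j + f j i) := by
  conv_lhs => arg 2; rw [Finset.sum_comm]
  simp only [← Finset.sum_add_distrib]

lemma Finset.sum_erase_lt_sum_sum_erase [DecidableEq ι] [Nontrivial ι] {k : ι → ι → ℝ}
    (hk : ∀ i j, i ≠ j → 0 < k i j) (i : ι) :
    ∑ j ∈ univ.erase i, k i j < ∑ i', ∑ j ∈ univ.erase i', k i' j := by
  have hrow : ∀ i', 0 < ∑ j ∈ univ.erase i', k i' j := fun i' => by
    obtain ⟨j, hj⟩ := exists_ne i'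
    exact sum_pos (fun j hj => hk i' j (ne_of_mem_erase hj).symm)
      ⟨j, mem_erase.mpr ⟨hj, mem_univ j⟩⟩
  obtain ⟨i', hi'⟩ := exists_ne i
  exact single_lt_sum (f := fun i => ∑ j ∈ univ.erase i, k i j) hi' (mem_univ i)
    (mem_univ i') (hrow i') fun i'' _ _ => (hrow i'').le

lemma sum_sum_mul_mul_normSq_sub (c : ι → ℝ) (w : ι → ℂ) :
    ∑ i, ∑ j, c i * c j * normSq (w i - w j)
      = 2 * (∑ i, c i) * ∑ i, c i * normSq (w i) - 2 * normSq (∑ i, (c i : ℂ) * w i) := by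
  have hmean : normSq (∑ i, (c i : ℂ) * w i) = ∑ i, ∑ j, c i * c j * (w i * conj (w j)).re := by
    rw [← Complex.ofReal_re (normSq _), ← Complex.mul_conj, map_sum, sum_mul_sum, Complex.re_sum]
    refine sum_congr rfl fun i _ => ?_
    rw [Complex.re_sum]
    refine sum_congr rfl fun j _ => ?_
    simp only [map_mul, Complex.conj_ofReal, Complex.mul_re, Complex.mul_im, Complex.ofReal_re,
      Complex.ofReal_im, Complex.conj_re, Complex.conj_im]
    ring
  rw [hmean, show ∀ a b : ℝ, 2 * a * b = a * b + b * a by intros; ring, sum_mul_sum, sum_mul_sum,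
    ← sum_add_distrib, mul_sum, ← sum_sub_distrib]
  refine sum_congr rfl fun i _ => ?_
  rw [← sum_add_distrib, mul_sum, ← sum_sub_distrib]
  refine sum_congr rfl fun j _ => ?_
  rw [Complex.normSq_sub]
  ring

variable {k : ι → ι → ℝ} {c : ι → ℝ} {w : ι → ℂ} {μ : ℂ}

lemma mul_sum_sum_mul_normSq_sub_le {δ : ℝ} (hc : ∀ i, 0 ≤ c i)
    (hδ : ∀ i j, i ≠ j → δ ≤ k i j) :
    δ * ∑ i, ∑ j, c i * c j * normSq (w i - w j)
      ≤ ∑ i, ∑ j, k i j * c i * c j * normSq (w i - w j) := by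
  rw [mul_sum]
  refine sum_le_sum fun i _ => ?_
  rw [mul_sum]
  refine sum_le_sum fun j _ => ?_
  rcases eq_or_ne i j with rfl | hij
  · simp
  · have := mul_nonneg (mul_nonneg (hc i) (hc j)) (Complex.normSq_nonneg (w i - w j))
    nlinarith [hδ i j hij]

def weightedLaplacian (k : ι → ι → ℝ) (c : ι → ℝ) (w : ι → ℂ) : ι → ℂ :=
  fun i => ∑ j, (k i j : ℂ) * c j * (w i - w j)

namespace weightedLaplacian

lemma eigenvalue_mul_sum_mul_eq_zero (hk : ∀ i j, k i j = k j i)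
    (heig : weightedLaplacian k c w = μ • w) :
    μ * ∑ i, (c i : ℂ) * w i = 0 := by
  have heig i : ∑ j, (k i j : ℂ) * c j * (w i - w j) = μ * w i := congrFun heig i
  have hsum : μ * ∑ i, (c i : ℂ) * w i = ∑ i, ∑ j, (k i j : ℂ) * c i * c j * (w i - w j) := by
    rw [mul_sum]
    refine sum_congr rfl fun i _ => ?_
    rw [mul_left_comm, ← heig, mul_sum]
    exact sum_congr rfl fun j _ => by ring
  rw [← add_self_eq_zero, hsum, sum_sum_add_sum_sum_comm]
  exact sum_eq_zero fun i _ => sum_eq_zero fun j _ => by rw [hk j i]; ring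

lemma two_mul_eigenvalue_mul_sum_mul_normSq (hk : ∀ i j, k i j = k j i)
    (heig : weightedLaplacian k c w = μ • w) :
    2 * μ * (∑ i, c i * normSq (w i) : ℝ)
      = (∑ i, ∑ j, k i j * c i * c j * normSq (w i - w j) : ℝ) := by
  have heig i : ∑ j, (k i j : ℂ) * c j * (w i - w j) = μ * w i := congrFun heig i
  have hsum : μ * (∑ i, c i * normSq (w i) : ℝ)
      = ∑ i, ∑ j, (k i j : ℂ) * c i * c j * (conj (w i) * (w i - w j)) := by
    push_cast
    rw [mul_sum]
    refine sum_congr rfl fun i _ => ?_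
    rw [Complex.normSq_eq_conj_mul_self,
      show μ * (c i * (conj (w i) * w i)) = c i * conj (w i) * (μ * w i) by ring, ← heig, mul_sum]
    exact sum_congr rfl fun j _ => by ring
  rw [two_mul, add_mul, hsum, sum_sum_add_sum_sum_comm]
  push_cast
  refine sum_congr rfl fun i _ => sum_congr rfl fun j _ => ?_
  rw [Complex.normSq_eq_conj_mul_self, hk j i, map_sub]
  ring

lemma eigenvalue_eq_sum_of_forall_mul_normSq_eq_zero (heig : weightedLaplacian k c w = μ • w)
    (hN : ∀ j, c j * normSq (w j) = 0) {i : ι} (hwi : w i ≠ 0) :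
    μ = (∑ j, k i j * c j : ℝ) := by
  have hcw : ∀ j, (c j : ℂ) * w j = 0 := fun j => by
    rcases mul_eq_zero.mp (hN j) with h | h
    · simp [h]
    · simp [Complex.normSq_eq_zero.mp h]
  refine (mul_left_inj' hwi).mp ?_
  rw [← smul_eq_mul, ← Pi.smul_apply, ← heig, weightedLaplacian]
  push_cast
  rw [sum_mul]
  refine sum_congr rfl fun j _ => ?_
  linear_combination -(k i j : ℂ) * hcw j

lemma eigenvalue_eq_zero_or_im_eq_zero_and_mul_sum_le_re {δ : ℝ} (hk : ∀ i j, k i j = k j i)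
    (hc : ∀ i, 0 ≤ c i) (hδ : ∀ i j, i ≠ j → δ ≤ k i j) (hw : w ≠ 0)
    (heig : weightedLaplacian k c w = μ • w) :
    μ = 0 ∨ (μ.im = 0 ∧ δ * ∑ i, c i ≤ μ.re) := by
  have hterm : ∀ i, 0 ≤ c i * normSq (w i) := fun i => mul_nonneg (hc i) (Complex.normSq_nonneg _)
  rcases (sum_nonneg fun i _ => hterm i).eq_or_lt with hN0 | hNpos
  · have h0 : ∀ j, c j * normSq (w j) = 0 := fun j =>
      (sum_eq_zero_iff_of_nonneg fun i _ => hterm i).mp hN0.symm j (mem_univ j)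
    obtain ⟨i, hwi⟩ := Function.ne_iff.mp hw
    have hci : c i = 0 :=
      (mul_eq_zero.mp (h0 i)).resolve_right (Complex.normSq_eq_zero.not.mpr hwi)
    right
    rw [eigenvalue_eq_sum_of_forall_mul_normSq_eq_zero heig h0 hwi, Complex.ofReal_im,
      Complex.ofReal_re, mul_sum]
    refine ⟨rfl, sum_le_sum fun j _ => ?_⟩
    rcases eq_or_ne i j with rfl | hij
    · simp [hci]
    · exact mul_le_mul_of_nonneg_right (hδ i j hij) (hc j)
  · by_cases hμ : μ = 0
    · exact Or.inl hμ
    right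
    have hmean := (mul_eq_zero.mp (eigenvalue_mul_sum_mul_eq_zero hk heig)).resolve_left hμ
    have hreal : μ = ((∑ i, ∑ j, k i j * c i * c j * normSq (w i - w j)) /
        (2 * ∑ i, c i * normSq (w i)) : ℝ) := by
      rw [Complex.ofReal_div, eq_div_iff (by exact_mod_cast (mul_pos two_pos hNpos).ne'),
        ← two_mul_eigenvalue_mul_sum_mul_normSq hk heig]
      push_cast
      ring
    rw [hreal, Complex.ofReal_im, Complex.ofReal_re, le_div_iff₀ (mul_pos two_pos hNpos)]
    refine ⟨rfl, le_of_eq_of_le ?_ (mul_sum_sum_mul_normSq_sub_le hc hδ)⟩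
    rw [sum_sum_mul_mul_normSq_sub, hmean, map_zero]
    ring

end weightedLaplacian

end

section

variable {m : ℕ} {k : Fin (m + 1) → Fin (m + 1) → ℝ} {c : Fin (m + 1) → ℝ}

lemma vecMul_map_neg_MSmatF (hk : ∀ i j, k i j = k j i) (w : Fin (m + 1) → ℂ) :
    w ᵥ* (-(MSmatF m k c)).map Complex.ofReal = weightedLaplacian k c w := by
  funext i
  simp only [vecMul, dotProduct, Matrix.map_apply, Matrix.neg_apply, MSmatF, Matrix.of_apply,
    weightedLaplacian]
  rw [← add_sum_erase _ _ (mem_univ i), if_pos rfl,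
    ← sum_erase univ (f := fun j => (k i j : ℂ) * c j * (w i - w j)) (a := i) (by simp)]
  push_cast
  rw [neg_neg, mul_sum, ← sum_add_distrib]
  refine sum_congr rfl fun j hj => ?_
  rw [if_neg (ne_of_mem_erase hj), hk j i]
  push_cast
  ring

lemma neg_MSmatF_apply_self_add_sum_abs_le {cmax : ℝ} (hk : ∀ i j, i ≠ j → 0 ≤ k i j)
    (hc : ∀ i, 0 ≤ c i) (hcmax : ∀ i, c i ≤ cmax) (i : Fin (m + 1)) :
    (-MSmatF m k c) i i + ∑ j ∈ univ.erase i, |(-MSmatF m k c) i j|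
      ≤ 2 * cmax * ∑ j ∈ univ.erase i, k i j := by
  have hdiag : (-MSmatF m k c) i i = ∑ j ∈ univ.erase i, k i j * c j := by
    simp [MSmatF]
  have hoff : ∀ j ∈ univ.erase i, |(-MSmatF m k c) i j| = k i j * c i := fun j hj => by
    have hij := (ne_of_mem_erase hj).symm
    simp [MSmatF, hij, abs_of_nonneg (mul_nonneg (hk i j hij) (hc i))]
  rw [hdiag, sum_congr rfl hoff, two_mul, add_mul, mul_sum, ← sum_add_distrib, ← sum_add_distrib]
  refine sum_le_sum fun j hj => ?_
  have hkij := hk i j (ne_of_mem_erase hj).symm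
  nlinarith [mul_le_mul_of_nonneg_left (hcmax i) hkij, mul_le_mul_of_nonneg_left (hcmax j) hkij]

end

/-- with `δ = c_min · min_{i ≠ j} k i j` and
`η = 2 c_max ∑_{i ≠ j} k i j`, every complex eigenvalue `μ` of `-F`
(i.e. every element of the spectrum of the complexified matrix `-F`)
is either `0`, or real with `δ ≤ μ < η`. -/
theorem spectrum_neg_F_subset
    (m : ℕ) (hm : 1 ≤ m)
    (k : Fin (m + 1) → Fin (m + 1) → ℝ)
    (hsymm : ∀ i j, k i j = k j i)
    (hkpos : ∀ i j, i ≠ j → 0 < k i j)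
    (c : Fin (m + 1) → ℝ)
    (hc : ∀ i, 0 ≤ c i)
    (cmin cmax : ℝ)
    (hcmin : 0 < cmin)
    (hmin : cmin ≤ ∑ i, c i)
    (hmax : ∑ i, c i ≤ cmax)
    (δ₀ : ℝ)
    (hδ₀ : IsLeast {x : ℝ | ∃ i j : Fin (m + 1), i ≠ j ∧ k i j = x} δ₀)
    (δ η : ℝ)
    (hδ : δ = cmin * δ₀)
    (hη : η = 2 * cmax * ∑ i : Fin (m + 1), ∑ j ∈ Finset.univ.erase i, k i j) :
    ∀ μ ∈ spectrum ℂ ((-(MSmatF m k c)).map (Complex.ofReal)),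
      μ = 0 ∨ (μ.im = 0 ∧ δ ≤ μ.re ∧ μ.re < η) := by
  intro μ hμ
  obtain ⟨⟨i₀, j₀, hij₀, rfl⟩, hδ₀le⟩ := hδ₀
  obtain ⟨w, hw0, hw⟩ := exists_vecMul_eq_smul_of_mem_spectrum hμ
  rw [vecMul_map_neg_MSmatF hsymm] at hw
  rcases weightedLaplacian.eigenvalue_eq_zero_or_im_eq_zero_and_mul_sum_le_re hsymm hc
    (fun i j hij => hδ₀le ⟨i, j, hij, rfl⟩) hw0 hw with hμ0 | ⟨him, hlower⟩
  · exact Or.inl hμ0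
  refine Or.inr ⟨him, ?_, ?_⟩
  · calc δ = cmin * k i₀ j₀ := hδ
      _ ≤ (∑ i, c i) * k i₀ j₀ := mul_le_mul_of_nonneg_right hmin (hkpos i₀ j₀ hij₀).le
      _ ≤ μ.re := by rwa [mul_comm]
  · have : Nontrivial (Fin (m + 1)) := Fin.nontrivial_iff_two_le.mpr (by omega)
    have hcmax : 0 < cmax := hcmin.trans_le (hmin.trans hmax)
    obtain ⟨i, hi⟩ := exists_re_le_of_mem_spectrum_map_ofReal hμ
    calc μ.re ≤ _ := hi
      _ ≤ 2 * cmax * ∑ j ∈ univ.erase i, k i j :=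
        neg_MSmatF_apply_self_add_sum_abs_le (fun i j h => (hkpos i j h).le) hc
          (fun i => (single_le_sum (fun j _ => hc j) (mem_univ i)).trans hmax) i
      _ < η := by
        rw [hη]
        exact mul_lt_mul_of_pos_left (sum_erase_lt_sum_sum_erase hkpos i) (by positivity)
end

section
/- The space ℝ^n decomposes as the direct sum of the kernel and the image of F (viewed as a linear map), the restriction F̃ of F to im(F) is a linear automorphism of im(F), and every eigenvalue of −F̃ is real and lies in the interval [δ, η). -/
/-!
Where `x` vanishes together with `c`, write `x = c y`; the symmetry of `k` turns
`2 ∑ᵢ uᵢ (F x)ᵢ` into `-∑ᵢⱼ kᵢⱼ cᵢ cⱼ (uᵢ - uⱼ)(yᵢ - yⱼ)`. With `u = y` this shows that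
`ker F` is spanned by `c`, which meets `im F` (zero-sum vectors, as the columns of `F` sum to
zero) only in `0`; rank–nullity does the rest of the decomposition. For an eigenvector of `-F`
in `im F`: if it is nonzero at some `i` with `cᵢ = 0`, only the diagonal entry of row `i` of
`F` survives and the eigenvalue is `∑ⱼ kᵢⱼ cⱼ ≥ δ`; otherwise `u = conj y` exhibits the
eigenvalue as the real quotient of `∑ᵢⱼ kᵢⱼ cᵢ cⱼ |yᵢ - yⱼ|²` by `2 ∑ᵢ cᵢ |yᵢ|²`, and since
`∑ᵢ cᵢ yᵢ = 0` the Lagrange identity bounds it below by `δ`. The upper bound `η` comes from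
Gershgorin's circle theorem.
-/

open Finset Matrix ComplexConjugate

section SumIdentities

variable {ι R : Type*} [Fintype ι] [CommRing R]

theorem two_mul_sum_sum_mul_mul_sub_of_symm (K : ι → ι → R) (hK : ∀ i j, K i j = K j i)
    (u v : ι → R) :
    2 * ∑ i, ∑ j, K i j * (u i * (v j - v i))
      = -∑ i, ∑ j, K i j * ((u i - u j) * (v i - v j)) := by
  have hswap : ∑ i, ∑ j, K i j * (u i * (v j - v i))
      = ∑ i, ∑ j, K i j * (u j * (v i - v j)) := by
    rw [sum_comm]
    simp only [hK]
  rw [two_mul]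
  nth_rw 2 [hswap]
  simp only [← sum_add_distrib, ← sum_neg_distrib]
  exact sum_congr rfl fun i _ => sum_congr rfl fun j _ => by ring

theorem sum_sum_mul_mul_sub_mul_sub (a u v : ι → R) :
    ∑ i, ∑ j, a i * a j * ((u i - u j) * (v i - v j))
      = 2 * (∑ i, a i) * ∑ i, a i * (u i * v i)
        - 2 * (∑ i, a i * u i) * ∑ i, a i * v i := by
  have hexpand : ∀ i j, a i * a j * ((u i - u j) * (v i - v j))
      = a i * (u i * v i) * a j - a i * u i * (a j * v j)
        - a i * v i * (a j * u j) + a i * (a j * (u j * v j)) := fun i j => by ring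
  simp only [hexpand, sum_add_distrib, sum_sub_distrib, ← sum_mul, ← mul_sum]
  ring

end SumIdentities

theorem sum_sum_mul_normSq_sub_of_sum_mul_eq_zero {ι : Type*} [Fintype ι] (a : ι → ℝ)
    (y : ι → ℂ) (h : ∑ i, (a i : ℂ) * y i = 0) :
    ∑ i, ∑ j, a i * a j * Complex.normSq (y i - y j)
      = 2 * (∑ i, a i) * ∑ i, a i * Complex.normSq (y i) := by
  have := sum_sum_mul_mul_sub_mul_sub (fun i => (a i : ℂ)) (fun i => conj (y i)) y
  rw [h, mul_zero, sub_zero] at this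
  apply Complex.ofReal_injective
  push_cast
  simp only [Complex.normSq_eq_conj_mul_self, map_sub]
  exact this

section Positivity

variable {ι : Type*} [Fintype ι] {c : ι → ℝ}

theorem exists_pos_of_sum_pos (hcpos : 0 < ∑ i, c i) : ∃ i, 0 < c i := by
  by_contra! h
  exact (sum_nonpos fun i _ => h i).not_gt hcpos

theorem sum_add_le_sum_of_ne (hc : ∀ i, 0 ≤ c i) [DecidableEq ι] {i j : ι} (hij : i ≠ j) :
    c i + c j ≤ ∑ r, c r :=
  (sum_pair hij).symm.trans_le (sum_le_sum_of_subset_of_nonneg (subset_univ _) fun r _ _ => hc r)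

theorem sum_sum_erase_pos [DecidableEq ι] [Nontrivial ι] {k : ι → ι → ℝ}
    (hkpos : ∀ i j, i ≠ j → 0 < k i j) : 0 < ∑ i, ∑ j ∈ univ.erase i, k i j := by
  obtain ⟨a, b, hab⟩ := exists_pair_ne ι
  exact sum_pos' (fun i _ => sum_nonneg fun j hj => (hkpos i j (ne_of_mem_erase hj).symm).le)
    ⟨a, mem_univ a, sum_pos' (fun j hj => (hkpos a j (ne_of_mem_erase hj).symm).le)
      ⟨b, mem_erase.2 ⟨hab.symm, mem_univ b⟩, hkpos a b hab⟩⟩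

end Positivity

section LinearAlgebra

variable {K V : Type*} [Field K] [AddCommGroup V] [Module K V] [FiniteDimensional K V]

theorem LinearMap.isCompl_ker_range_of_disjoint {f : V →ₗ[K] V}
    (h : Disjoint (LinearMap.ker f) (LinearMap.range f)) :
    IsCompl (LinearMap.ker f) (LinearMap.range f) :=
  (Submodule.isCompl_iff_disjoint _ _ (by rw [add_comm, f.finrank_range_add_finrank_ker])).2 h

theorem LinearMap.bijective_restrict_range_of_disjoint {f : V →ₗ[K] V}
    (h : Disjoint (LinearMap.ker f) (LinearMap.range f)) :
    Function.Bijective (f.restrict (p := LinearMap.range f) (q := LinearMap.range f)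
      fun x _ => LinearMap.mem_range_self f x) :=
  have hinj := (LinearMap.injective_restrict_iff _).2 h.symm
  ⟨hinj, LinearMap.injective_iff_surjective.1 hinj⟩

theorem Module.End.exists_mem_ne_zero_of_mem_spectrum_restrict {f : Module.End K V}
    {p : Submodule K V} (hf : ∀ x ∈ p, f x ∈ p) {μ : K}
    (hμ : μ ∈ spectrum K (f.restrict hf)) : ∃ v ∈ p, v ≠ 0 ∧ f v = μ • v := by
  obtain ⟨v, hv⟩ := (Module.End.hasEigenvalue_iff_mem_spectrum.2 hμ).exists_hasEigenvector
  exact ⟨v, v.2, fun h => hv.2 (Subtype.ext h), congrArg Subtype.val hv.apply_eq_smul⟩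

end LinearAlgebra

section MSmatF

variable {m : ℕ} {k : Fin (m + 1) → Fin (m + 1) → ℝ} {c : Fin (m + 1) → ℝ}
  {R : Type*} [CommRing R]

theorem MSmatF_map_mulVec_apply (f : ℝ →+* R) (v : Fin (m + 1) → R) (i : Fin (m + 1)) :
    ((MSmatF m k c).map f *ᵥ v) i = ∑ j, f (k i j) * (f (c i) * v j - f (c j) * v i) := by
  rw [mulVec, dotProduct, ← add_sum_erase univ _ (mem_univ i),
    ← sum_erase univ (a := i) (by ring)]
  simp only [map_apply, MSmatF, of_apply, ite_true, map_neg, map_sum, neg_mul, sum_mul,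
    neg_add_eq_sub, ← sum_sub_distrib]
  refine sum_congr rfl fun j hj => ?_
  rw [if_neg (ne_of_mem_erase hj).symm]
  simp only [map_mul]
  ring

theorem MSmatF_map_mulVec_apply_of_eq_zero (f : ℝ →+* R) (v : Fin (m + 1) → R)
    {i : Fin (m + 1)} (hci : c i = 0) :
    ((MSmatF m k c).map f *ᵥ v) i = -f (∑ j ∈ univ.erase i, k i j * c j) * v i := by
  rw [mulVec, dotProduct, sum_eq_single i]
  · simp [MSmatF]
  · intro j _ hji
    simp [MSmatF, Ne.symm hji, hci]
  · simp

theorem sum_MSmatF_map_mulVec (hsymm : ∀ i j, k i j = k j i) (f : ℝ →+* R)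
    (v : Fin (m + 1) → R) : ∑ i, ((MSmatF m k c).map f *ᵥ v) i = 0 := by
  simp only [MSmatF_map_mulVec_apply, mul_sub, sum_sub_distrib, sub_eq_zero]
  rw [sum_comm]
  simp only [hsymm]

theorem two_mul_sum_mul_MSmatF_map_mulVec (hsymm : ∀ i j, k i j = k j i) (f : ℝ →+* R)
    (u y : Fin (m + 1) → R) :
    2 * ∑ i, u i * ((MSmatF m k c).map f *ᵥ fun j => f (c j) * y j) i
      = -∑ i, ∑ j, f (k i j * (c i * c j)) * ((u i - u j) * (y i - y j)) := by
  rw [← two_mul_sum_sum_mul_mul_sub_of_symm _ fun i j => by rw [hsymm, mul_comm (c i)]]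
  congr 1
  refine sum_congr rfl fun i _ => ?_
  rw [MSmatF_map_mulVec_apply, mul_sum]
  refine sum_congr rfl fun j _ => ?_
  simp only [map_mul]
  ring

theorem sum_erase_mul_pos_of_eq_zero (hkpos : ∀ i j, i ≠ j → 0 < k i j) (hc : ∀ i, 0 ≤ c i)
    (hcpos : 0 < ∑ i, c i) {i : Fin (m + 1)} (hci : c i = 0) :
    0 < ∑ j ∈ univ.erase i, k i j * c j := by
  obtain ⟨r, hr⟩ := exists_pos_of_sum_pos hcpos
  have hri : r ≠ i := by rintro rfl; linarith
  exact sum_pos' (fun j hj => mul_nonneg (hkpos i j (ne_of_mem_erase hj).symm).le (hc j))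
    ⟨r, mem_erase.2 ⟨hri, mem_univ r⟩, mul_pos (hkpos i r hri.symm) hr⟩

theorem eq_zero_of_MSmatF_mulVec_eq_zero (hkpos : ∀ i j, i ≠ j → 0 < k i j)
    (hc : ∀ i, 0 ≤ c i) (hcpos : 0 < ∑ i, c i) {x : Fin (m + 1) → ℝ}
    (hx : MSmatF m k c *ᵥ x = 0) {i : Fin (m + 1)} (hci : c i = 0) : x i = 0 := by
  have hrow := MSmatF_map_mulVec_apply_of_eq_zero (RingHom.id ℝ) x (k := k) hci
  rw [RingHom.coe_id, map_id, hx, Pi.zero_apply, id_eq, eq_comm, mul_eq_zero] at hrow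
  exact hrow.resolve_left (neg_ne_zero.2 (sum_erase_mul_pos_of_eq_zero hkpos hc hcpos hci).ne')

theorem mul_mul_sub_eq_zero_of_MSmatF_mulVec_eq_zero (hsymm : ∀ i j, k i j = k j i)
    (hkpos : ∀ i j, i ≠ j → 0 < k i j) (hc : ∀ i, 0 ≤ c i) {y : Fin (m + 1) → ℝ}
    (hx : (MSmatF m k c *ᵥ fun j => c j * y j) = 0) (i j : Fin (m + 1)) :
    c i * c j * (y i - y j) = 0 := by
  have hpair := two_mul_sum_mul_MSmatF_map_mulVec (c := c) hsymm (RingHom.id ℝ) y y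
  simp only [RingHom.id_apply, RingHom.coe_id, map_id, hx, Pi.zero_apply, mul_zero,
    sum_const_zero, zero_eq_neg] at hpair
  have hnonneg : ∀ i j, 0 ≤ k i j * (c i * c j) * ((y i - y j) * (y i - y j)) := fun i j => by
    rcases eq_or_ne i j with rfl | hij
    · simp
    · exact mul_nonneg (mul_nonneg (hkpos i j hij).le (mul_nonneg (hc i) (hc j)))
        (mul_self_nonneg _)
  rcases eq_or_ne i j with rfl | hij
  · simp
  have hij0 := (sum_eq_zero_iff_of_nonneg fun j _ => hnonneg i j).1
    ((sum_eq_zero_iff_of_nonneg fun i _ => sum_nonneg fun j _ => hnonneg i j).1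
      hpair i (mem_univ i)) j (mem_univ j)
  have h : c i * c j * ((y i - y j) * (y i - y j)) = 0 :=
    (mul_right_inj' (hkpos i j hij).ne').1 (by linear_combination hij0)
  exact (pow_eq_zero_iff two_ne_zero).1 (by linear_combination c i * c j * h)

theorem exists_eq_smul_of_MSmatF_mulVec_eq_zero (hsymm : ∀ i j, k i j = k j i)
    (hkpos : ∀ i j, i ≠ j → 0 < k i j) (hc : ∀ i, 0 ≤ c i) (hcpos : 0 < ∑ i, c i)
    {x : Fin (m + 1) → ℝ} (hx : MSmatF m k c *ᵥ x = 0) : ∃ t : ℝ, x = t • c := by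
  obtain ⟨y, rfl⟩ : ∃ y : Fin (m + 1) → ℝ, (fun i => c i * y i) = x :=
    ⟨fun i => x i / c i, funext fun i =>
      mul_div_cancel_of_imp' (eq_zero_of_MSmatF_mulVec_eq_zero hkpos hc hcpos hx)⟩
  obtain ⟨i₀, hi₀⟩ := exists_pos_of_sum_pos hcpos
  refine ⟨y i₀, funext fun i => ?_⟩
  have h := mul_mul_sub_eq_zero_of_MSmatF_mulVec_eq_zero hsymm hkpos hc hx i i₀
  rw [Pi.smul_apply, smul_eq_mul, ← sub_eq_zero, ← mul_right_inj' hi₀.ne', mul_zero, ← h]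
  ring

theorem disjoint_ker_range_toLin'_MSmatF (hsymm : ∀ i j, k i j = k j i)
    (hkpos : ∀ i j, i ≠ j → 0 < k i j) (hc : ∀ i, 0 ≤ c i) (hcpos : 0 < ∑ i, c i) :
    Disjoint (LinearMap.ker (toLin' (MSmatF m k c)))
      (LinearMap.range (toLin' (MSmatF m k c))) := by
  rw [Submodule.disjoint_def]
  rintro _ hker ⟨w, rfl⟩
  simp only [LinearMap.mem_ker, toLin'_apply] at hker ⊢
  obtain ⟨t, ht⟩ := exists_eq_smul_of_MSmatF_mulVec_eq_zero hsymm hkpos hc hcpos hker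
  have hsum := sum_MSmatF_map_mulVec (c := c) hsymm (RingHom.id ℝ) w
  rw [RingHom.coe_id, map_id, ht] at hsum
  simp only [Pi.smul_apply, smul_eq_mul, ← mul_sum, mul_eq_zero, hcpos.ne', or_false] at hsum
  rw [ht, hsum, zero_smul]

theorem MSmatF_eigenvalue_eq_of_eq_zero {μ : ℂ} {x : Fin (m + 1) → ℂ}
    (heig : (MSmatF m k c).map Complex.ofRealHom *ᵥ x = -(μ • x)) {i : Fin (m + 1)}
    (hci : c i = 0) (hxi : x i ≠ 0) :
    μ = ((∑ j ∈ univ.erase i, k i j * c j : ℝ) : ℂ) := by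
  have hrow := MSmatF_map_mulVec_apply_of_eq_zero Complex.ofRealHom x (k := k) hci
  rw [heig, Pi.neg_apply, Pi.smul_apply, smul_eq_mul, neg_mul, neg_inj,
    Complex.ofRealHom_eq_coe] at hrow
  exact mul_right_cancel₀ hxi hrow

theorem mul_sum_le_sum_erase_mul_of_eq_zero {δ₀ : ℝ} (hδ₀ : ∀ i j, i ≠ j → δ₀ ≤ k i j)
    (hc : ∀ i, 0 ≤ c i) {i : Fin (m + 1)} (hci : c i = 0) :
    δ₀ * ∑ j, c j ≤ ∑ j ∈ univ.erase i, k i j * c j := by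
  rw [← sum_erase univ hci, mul_sum]
  exact sum_le_sum fun j hj =>
    mul_le_mul_of_nonneg_right (hδ₀ i j (ne_of_mem_erase hj).symm) (hc j)

theorem MSmatF_eigenvalue_mul_eq (hsymm : ∀ i j, k i j = k j i) {μ : ℂ} {y : Fin (m + 1) → ℂ}
    (heig : (MSmatF m k c).map Complex.ofRealHom *ᵥ (fun i => (c i : ℂ) * y i)
      = -(μ • fun i => (c i : ℂ) * y i)) :
    μ * ((2 * ∑ i, c i * Complex.normSq (y i) : ℝ) : ℂ)
      = ((∑ i, ∑ j, k i j * (c i * c j) * Complex.normSq (y i - y j) : ℝ) : ℂ) := by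
  have hpair := two_mul_sum_mul_MSmatF_map_mulVec (c := c) hsymm Complex.ofRealHom
    (fun i => conj (y i)) y
  simp only [Complex.ofRealHom_eq_coe] at hpair
  rw [heig] at hpair
  simp only [Pi.neg_apply, Pi.smul_apply, smul_eq_mul] at hpair
  have hlhs : ∑ i, conj (y i) * -(μ * ((c i : ℂ) * y i))
      = -μ * ∑ i, (c i : ℂ) * (conj (y i) * y i) := by
    rw [mul_sum]
    exact sum_congr rfl fun i _ => by ring
  rw [hlhs] at hpair
  push_cast at hpair ⊢
  simp only [Complex.normSq_eq_conj_mul_self, map_sub, mul_assoc]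
  simp only [mul_assoc] at hpair
  linear_combination -hpair

theorem MSmatF_eigenvalue_im_eq_zero_and_le_re (hsymm : ∀ i j, k i j = k j i)
    (hc : ∀ i, 0 ≤ c i) {δ₀ : ℝ} (hδ₀ : ∀ i j, i ≠ j → δ₀ ≤ k i j) {μ : ℂ}
    {x : Fin (m + 1) → ℂ} (hx0 : x ≠ 0) (hsum : ∑ i, x i = 0)
    (heig : (MSmatF m k c).map Complex.ofRealHom *ᵥ x = -(μ • x)) :
    μ.im = 0 ∧ δ₀ * ∑ i, c i ≤ μ.re := by
  by_cases hz : ∃ i, c i = 0 ∧ x i ≠ 0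
  · obtain ⟨i, hci, hxi⟩ := hz
    rw [MSmatF_eigenvalue_eq_of_eq_zero heig hci hxi, Complex.ofReal_im, Complex.ofReal_re]
    exact ⟨rfl, mul_sum_le_sum_erase_mul_of_eq_zero hδ₀ hc hci⟩
  push Not at hz
  obtain ⟨y, rfl⟩ : ∃ y : Fin (m + 1) → ℂ, (fun i => (c i : ℂ) * y i) = x :=
    ⟨fun i => x i / c i, funext fun i =>
      mul_div_cancel_of_imp' fun h => hz i (Complex.ofReal_eq_zero.1 h)⟩
  set S := ∑ i, c i * Complex.normSq (y i)
  set D := ∑ i, ∑ j, k i j * (c i * c j) * Complex.normSq (y i - y j)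
  have hS : 0 < S := by
    obtain ⟨i, hi⟩ := Function.ne_iff.1 hx0
    obtain ⟨hci, hyi⟩ := mul_ne_zero_iff.1 hi
    refine sum_pos' (fun j _ => mul_nonneg (hc j) (Complex.normSq_nonneg _)) ⟨i, mem_univ i, ?_⟩
    exact mul_pos ((hc i).lt_of_ne (Ne.symm (by exact_mod_cast hci)))
      (Complex.normSq_pos.2 hyi)
  have hμ : μ = ((D / (2 * S) : ℝ) : ℂ) := by
    rw [Complex.ofReal_div, eq_div_iff (by exact_mod_cast (by positivity : (2 * S) ≠ 0))]
    exact MSmatF_eigenvalue_mul_eq hsymm heig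
  have hD : δ₀ * (2 * (∑ i, c i) * S) ≤ D := by
    rw [← sum_sum_mul_normSq_sub_of_sum_mul_eq_zero c y hsum, mul_sum]
    refine sum_le_sum fun i _ => ?_
    rw [mul_sum]
    refine sum_le_sum fun j _ => ?_
    rcases eq_or_ne i j with rfl | hij
    · simp
    · rw [← mul_assoc]
      exact mul_le_mul_of_nonneg_right (mul_le_mul_of_nonneg_right (hδ₀ i j hij)
        (mul_nonneg (hc i) (hc j))) (Complex.normSq_nonneg _)
  rw [hμ, Complex.ofReal_im, Complex.ofReal_re, le_div_iff₀ (by positivity)]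
  exact ⟨rfl, by linarith⟩

theorem MSmatF_eigenvalue_re_lt (hm : 1 ≤ m) (hkpos : ∀ i j, i ≠ j → 0 < k i j)
    (hc : ∀ i, 0 ≤ c i) (hcpos : 0 < ∑ i, c i) {cmax : ℝ} (hmax : ∑ i, c i ≤ cmax) {μ : ℂ}
    {x : Fin (m + 1) → ℂ} (hx0 : x ≠ 0)
    (heig : (MSmatF m k c).map Complex.ofRealHom *ᵥ x = -(μ • x)) :
    μ.re < 2 * cmax * ∑ i, ∑ j ∈ univ.erase i, k i j := by
  have hμ : Module.End.HasEigenvalue (toLin' ((MSmatF m k c).map Complex.ofRealHom)) (-μ) :=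
    Module.End.hasEigenvalue_of_hasEigenvector
      ⟨Module.End.mem_eigenspace_iff.2 (by rw [toLin'_apply, heig, neg_smul]), hx0⟩
  obtain ⟨i, hi⟩ := eigenvalue_mem_ball hμ
  rw [Metric.mem_closedBall, dist_eq_norm] at hi
  have hdiag : ((MSmatF m k c).map Complex.ofRealHom) i i
      = ((-∑ j ∈ univ.erase i, k i j * c j : ℝ) : ℂ) := by simp [MSmatF]
  have hoff : ∀ j ∈ univ.erase i, ‖((MSmatF m k c).map Complex.ofRealHom) i j‖ = k i j * c i :=
    fun j hj => by
      simp [MSmatF, (ne_of_mem_erase hj).symm, abs_of_pos (hkpos i j (ne_of_mem_erase hj).symm),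
        abs_of_nonneg (hc i)]
  have hre : μ.re ≤ ∑ j ∈ univ.erase i, k i j * (c j + c i) := by
    have := (Complex.re_le_norm _).trans ((norm_neg (-μ - _)).trans_le hi)
    rw [sum_congr rfl hoff, hdiag] at this
    simp only [Complex.sub_re, Complex.neg_re, Complex.ofReal_re] at this
    simp only [mul_add, sum_add_distrib]
    linarith
  calc μ.re ≤ ∑ j ∈ univ.erase i, k i j * (c j + c i) := hre
    _ ≤ ∑ j ∈ univ.erase i, k i j * cmax := sum_le_sum fun j hj =>
        mul_le_mul_of_nonneg_left ((sum_add_le_sum_of_ne hc (ne_of_mem_erase hj)).trans hmax)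
          (hkpos i j (ne_of_mem_erase hj).symm).le
    _ = cmax * ∑ j ∈ univ.erase i, k i j := by
        rw [mul_sum]
        exact sum_congr rfl fun _ _ => mul_comm _ _
    _ ≤ cmax * ∑ i, ∑ j ∈ univ.erase i, k i j :=
        mul_le_mul_of_nonneg_left (single_le_sum (f := fun i => ∑ j ∈ univ.erase i, k i j)
          (fun p _ => sum_nonneg fun q hq => (hkpos p q (ne_of_mem_erase hq).symm).le)
          (mem_univ i)) (hcpos.trans_le hmax).le
    _ < 2 * cmax * ∑ i, ∑ j ∈ univ.erase i, k i j := by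
        have : Nontrivial (Fin (m + 1)) := Fin.nontrivial_iff_two_le.2 (by omega)
        linarith [mul_pos (hcpos.trans_le hmax) (sum_sum_erase_pos hkpos)]

end MSmatF

/-- `ℝⁿ = ker F ⊕ im F`, the restriction `F̃` of `F` to `im F` is a
linear automorphism of `im F`, and every (complex) eigenvalue of the restriction of
`-F` to its image (the complexification of `-F̃`) is real and lies in `[δ, η)`. -/
theorem ker_range_compl_and_spectrum_restriction
    (m : ℕ) (hm : 1 ≤ m)
    (k : Fin (m + 1) → Fin (m + 1) → ℝ)
    (hsymm : ∀ i j, k i j = k j i)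
    (hkpos : ∀ i j, i ≠ j → 0 < k i j)
    (c : Fin (m + 1) → ℝ)
    (hc : ∀ i, 0 ≤ c i)
    (cmin cmax : ℝ)
    (hcmin : 0 < cmin)
    (hmin : cmin ≤ ∑ i, c i)
    (hmax : ∑ i, c i ≤ cmax)
    (δ₀ : ℝ)
    (hδ₀ : IsLeast {x : ℝ | ∃ i j : Fin (m + 1), i ≠ j ∧ k i j = x} δ₀)
    (δ η : ℝ)
    (hδ : δ = cmin * δ₀)
    (hη : η = 2 * cmax * ∑ i : Fin (m + 1), ∑ j ∈ Finset.univ.erase i, k i j) :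
    IsCompl (LinearMap.ker (Matrix.toLin' (MSmatF m k c)))
        (LinearMap.range (Matrix.toLin' (MSmatF m k c)))
      ∧
    Function.Bijective
      ((Matrix.toLin' (MSmatF m k c)).restrict
        (p := LinearMap.range (Matrix.toLin' (MSmatF m k c)))
        (q := LinearMap.range (Matrix.toLin' (MSmatF m k c)))
        (fun x _ => LinearMap.mem_range_self _ x))
      ∧
    (∀ μ ∈ spectrum ℂ
        ((-(Matrix.toLin' ((MSmatF m k c).map Complex.ofReal))).restrict
          (p := LinearMap.range (Matrix.toLin' ((MSmatF m k c).map Complex.ofReal)))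
          (q := LinearMap.range (Matrix.toLin' ((MSmatF m k c).map Complex.ofReal)))
          (fun x _ => ⟨-x, by simp [Matrix.mulVec_neg]⟩)),
      μ.im = 0 ∧ δ ≤ μ.re ∧ μ.re < η) := by
  have hcpos : 0 < ∑ i, c i := hcmin.trans_le hmin
  have hdisj := disjoint_ker_range_toLin'_MSmatF hsymm hkpos hc hcpos
  refine ⟨LinearMap.isCompl_ker_range_of_disjoint hdisj,
    LinearMap.bijective_restrict_range_of_disjoint hdisj, fun μ hμ => ?_⟩
  obtain ⟨x, ⟨w, rfl⟩, hx0, heig⟩ := Module.End.exists_mem_ne_zero_of_mem_spectrum_restrict _ hμ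
  rw [LinearMap.neg_apply, neg_eq_iff_eq_neg, toLin'_apply] at heig
  have hsum : ∑ i, toLin' ((MSmatF m k c).map Complex.ofReal) w i = 0 :=
    sum_MSmatF_map_mulVec hsymm Complex.ofRealHom w
  have hδ₀k : ∀ i j, i ≠ j → δ₀ ≤ k i j := fun i j hij => hδ₀.2 ⟨i, j, hij, rfl⟩
  have hδ₀pos : 0 < δ₀ := by
    obtain ⟨i, j, hij, hk⟩ := hδ₀.1
    exact hk ▸ hkpos i j hij
  obtain ⟨him, hre⟩ :=
    MSmatF_eigenvalue_im_eq_zero_and_le_re hsymm hc hδ₀k hx0 hsum heig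
  refine ⟨him, hδ ▸ ?_, hη ▸ MSmatF_eigenvalue_re_lt hm hkpos hc hcpos hmax hx0 heig⟩
  calc cmin * δ₀ ≤ (∑ i, c i) * δ₀ := mul_le_mul_of_nonneg_right hmin hδ₀pos.le
    _ ≤ μ.re := by rwa [mul_comm]
end

section
/- With X the n×n matrix having X_{ii} = 1 for all i, X_{nj} = −1 for j = 1,…,n−1, and all other entries 0, and Y the n×n matrix having Y_{ii} = 1 for all i, Y_{nj} = 1 for j = 1,…,n−1, and all other entries 0, one has Y = X^{−1}, and the conjugated matrix Y F X is blockwise upper triangular: its (i,j) entry equals −[F_0]_{ij} for i,j ≤ n−1, its (i,n) entry equals k_{in} c_i for i ≤ n−1, and its n-th row is identically zero. -/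
/-- The reduced matrix `F₀` with entries `[F₀] i j = -(k i j - k i n) * c i` for
`i ≠ j` and `[F₀] i i = ∑_{j ≠ i, j ≤ n-1} (k i j - k i n) * c j + c_tot * k i n`,
where `c_tot = ∑ r, c r` and `n` denotes the last index `Fin.last m`. -/
def MSmatF0 (m : ℕ) (k : Fin (m + 1) → Fin (m + 1) → ℝ)
    (c : Fin (m + 1) → ℝ) : Matrix (Fin m) (Fin m) ℝ :=
  Matrix.of fun i j =>
    if i = j then
      (∑ j' ∈ Finset.univ.erase i,
          (k i.castSucc j'.castSucc - k i.castSucc (Fin.last m)) * c j'.castSucc)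
        + (∑ r, c r) * k i.castSucc (Fin.last m)
    else -((k i.castSucc j.castSucc - k i.castSucc (Fin.last m)) * c i.castSucc)

/-! `X` and `Y` are the shears `rowShear n (-1)` and `rowShear n 1`, which are mutually inverse.
Right multiplication by `X` subtracts the last column from the others; left multiplication by `Y`
replaces the last row by the sum of all rows, which vanishes because `k` is symmetric, so every
column of `F` sums to zero. What is left of the leading block is `F i j - F i n = -[F₀] i j`. -/

namespace Matrix

variable {R ι : Type*} [DecidableEq ι]

def rowShear [Zero R] [One R] (l : ι) (a : R) : Matrix ι ι R :=
  of fun i j => if i = j then 1 else if i = l then a else 0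

theorem rowShear_zero [Zero R] [One R] (l : ι) : rowShear l (0 : R) = 1 := by
  ext i j
  simp [rowShear, one_apply]

section Semiring

variable [Fintype ι] [Semiring R] (A : Matrix ι ι R) {l : ι} (a : R)

theorem rowShear_mul_apply_of_ne {i : ι} (hi : i ≠ l) (j : ι) :
    (rowShear l a * A) i j = A i j := by
  simp [rowShear, mul_apply, hi, ite_mul]

theorem rowShear_mul_apply_self (j : ι) :
    (rowShear l a * A) l j = A l j + a * ∑ r ∈ Finset.univ.erase l, A r j := by
  rw [mul_apply, ← Finset.add_sum_erase _ _ (Finset.mem_univ l), Finset.mul_sum]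
  congr 1
  · simp [rowShear]
  · refine Finset.sum_congr rfl fun r hr => ?_
    simp [rowShear, Ne.symm (Finset.ne_of_mem_erase hr)]

theorem mul_rowShear_apply_self (i : ι) : (A * rowShear l a) i l = A i l := by
  rw [mul_apply, Fintype.sum_eq_single l fun r hr => by simp [rowShear, hr]]
  simp [rowShear]

theorem mul_rowShear_apply_of_ne (i : ι) {j : ι} (hj : j ≠ l) :
    (A * rowShear l a) i j = A i j + A i l * a := by
  rw [mul_apply, Fintype.sum_eq_add j l hj fun r hr => by simp [rowShear, hr.1, hr.2]]
  simp [rowShear, hj.symm]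

theorem rowShear_mul_rowShear (b : R) :
    rowShear l a * rowShear l b = rowShear l (a + b) := by
  ext i j
  rcases eq_or_ne j l with rfl | hj
  · rw [mul_rowShear_apply_self]
    simp +contextual [rowShear]
  · rw [mul_rowShear_apply_of_ne _ _ _ hj]
    rcases eq_or_ne i l with rfl | hi
    · simp [rowShear, Ne.symm hj]
    · simp [rowShear, hi]

end Semiring

theorem inv_rowShear [Fintype ι] [CommRing R] (l : ι) (a : R) :
    (rowShear l a)⁻¹ = rowShear l (-a) :=
  inv_eq_left_inv <| by rw [rowShear_mul_rowShear, neg_add_cancel, rowShear_zero]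

end Matrix

open Matrix

theorem sum_MSmatF_apply {m : ℕ} {k : Fin (m + 1) → Fin (m + 1) → ℝ}
    (hsymm : ∀ i j, k i j = k j i) (c : Fin (m + 1) → ℝ) (j : Fin (m + 1)) :
    ∑ i, MSmatF m k c i j = 0 := by
  rw [← Finset.sum_erase_add _ _ (Finset.mem_univ j)]
  have hoff : ∀ i ∈ Finset.univ.erase j, MSmatF m k c i j = k j i * c i := fun i hi => by
    simp [MSmatF, Finset.ne_of_mem_erase hi, hsymm i j]
  rw [Finset.sum_congr rfl hoff]
  simp [MSmatF]

theorem MSmatF_apply_castSucc_sub_last (m : ℕ) (k : Fin (m + 1) → Fin (m + 1) → ℝ)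
    (c : Fin (m + 1) → ℝ) (i j : Fin m) :
    MSmatF m k c i.castSucc j.castSucc - MSmatF m k c i.castSucc (Fin.last m)
      = -MSmatF0 m k c i j := by
  have hi : i.castSucc ≠ Fin.last m := (Fin.castSucc_lt_last i).ne
  rcases eq_or_ne i j with rfl | hij
  · simp only [MSmatF, MSmatF0, of_apply, if_neg hi]
    rw [Finset.sum_erase_eq_sub (Finset.mem_univ i.castSucc),
      Finset.sum_erase_eq_sub (Finset.mem_univ i),
      Fin.sum_univ_castSucc (f := fun r => k i.castSucc r * c r), Fin.sum_univ_castSucc (f := c)]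
    simp only [sub_mul, Finset.sum_sub_distrib, ← Finset.mul_sum, if_true]
    ring
  · simp only [MSmatF, MSmatF0, of_apply, Fin.castSucc_inj, if_neg hij, if_neg hi]
    ring

theorem conjugated_F_blockwise_upper_triangular_general
    (m : ℕ)
    (k : Fin (m + 1) → Fin (m + 1) → ℝ)
    (hsymm : ∀ i j, k i j = k j i)
    (c : Fin (m + 1) → ℝ)
    (X Y : Matrix (Fin (m + 1)) (Fin (m + 1)) ℝ)
    (hX : X = Matrix.of fun i j =>
      if i = j then 1 else if i = Fin.last m then (-1 : ℝ) else 0)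
    (hY : Y = Matrix.of fun i j =>
      if i = j then 1 else if i = Fin.last m then (1 : ℝ) else 0) :
    Y = X⁻¹
      ∧ (∀ i j : Fin m,
          (Y * MSmatF m k c * X) i.castSucc j.castSucc = -(MSmatF0 m k c i j))
      ∧ (∀ i : Fin m,
          (Y * MSmatF m k c * X) i.castSucc (Fin.last m)
            = k i.castSucc (Fin.last m) * c i.castSucc)
      ∧ (∀ j : Fin (m + 1), (Y * MSmatF m k c * X) (Fin.last m) j = 0) := by
  obtain rfl : X = rowShear (Fin.last m) (-1) := hX
  obtain rfl : Y = rowShear (Fin.last m) 1 := hY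
  have hYF_last : ∀ j, (rowShear (Fin.last m) (1 : ℝ) * MSmatF m k c) (Fin.last m) j = 0 := by
    intro j
    rw [rowShear_mul_apply_self, one_mul,
      Finset.add_sum_erase _ (MSmatF m k c · j) (Finset.mem_univ _), sum_MSmatF_apply hsymm]
  refine ⟨by rw [inv_rowShear, neg_neg], fun i j => ?_, fun i => ?_, fun j => ?_⟩
  · have hi := (Fin.castSucc_lt_last i).ne
    rw [mul_rowShear_apply_of_ne _ _ _ (Fin.castSucc_lt_last j).ne,
      rowShear_mul_apply_of_ne _ _ hi, rowShear_mul_apply_of_ne _ _ hi, mul_neg_one,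
      ← sub_eq_add_neg, MSmatF_apply_castSucc_sub_last]
  · have hi := (Fin.castSucc_lt_last i).ne
    rw [mul_rowShear_apply_self, rowShear_mul_apply_of_ne _ _ hi]
    simp [MSmatF, hi]
  · rw [mul_apply]
    exact Finset.sum_eq_zero fun r _ => by rw [hYF_last, zero_mul]

/-- with `X` the matrix with `X i i = 1`, `X n j = -1` for `j ≠ n`,
`0` otherwise, and `Y` the matrix with `Y i i = 1`, `Y n j = 1` for `j ≠ n`,
`0` otherwise, one has `Y = X⁻¹`, and `Y * F * X` is blockwise upper triangular:
its `(i, j)` entry is `-[F₀] i j` for `i, j ≤ n - 1`, its `(i, n)` entry is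
`k i n * c i` for `i ≤ n - 1`, and its `n`-th row vanishes. -/
theorem conjugated_F_blockwise_upper_triangular
    (m : ℕ) (hm : 1 ≤ m)
    (k : Fin (m + 1) → Fin (m + 1) → ℝ)
    (hsymm : ∀ i j, k i j = k j i)
    (hkpos : ∀ i j, i ≠ j → 0 < k i j)
    (c : Fin (m + 1) → ℝ)
    (hc : ∀ i, 0 ≤ c i)
    (X Y : Matrix (Fin (m + 1)) (Fin (m + 1)) ℝ)
    (hX : X = Matrix.of fun i j =>
      if i = j then 1 else if i = Fin.last m then (-1 : ℝ) else 0)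
    (hY : Y = Matrix.of fun i j =>
      if i = j then 1 else if i = Fin.last m then (1 : ℝ) else 0) :
    Y = X⁻¹
      ∧ (∀ i j : Fin m,
          (Y * MSmatF m k c * X) i.castSucc j.castSucc = -(MSmatF0 m k c i j))
      ∧ (∀ i : Fin m,
          (Y * MSmatF m k c * X) i.castSucc (Fin.last m)
            = k i.castSucc (Fin.last m) * c i.castSucc)
      ∧ (∀ j : Fin (m + 1), (Y * MSmatF m k c * X) (Fin.last m) j = 0) :=
  conjugated_F_blockwise_upper_triangular_general m k hsymm c X Y hX hY
end

section
/- The matrix F_0 is invertible, and every complex eigenvalue of F_0 is real and lies in the interval [δ, η). -/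
open Finset Matrix ComplexConjugate

lemma exists_mulVec_eq_smul_of_mem_spectrum {n K : Type*} [Fintype n] [DecidableEq n] [Field K]
    {M : Matrix n n K} {μ : K} (hμ : μ ∈ spectrum K M) : ∃ v ≠ 0, M *ᵥ v = μ • v := by
  rw [← Matrix.spectrum_toLin', ← Module.End.hasEigenvalue_iff_mem_spectrum] at hμ
  obtain ⟨v, hv⟩ := hμ.exists_hasEigenvector
  exact ⟨v, hv.2, by simpa using hv.apply_eq_smul⟩

lemma isUnit_of_zero_notMem_spectrum_map {n K L : Type*} [Fintype n] [DecidableEq n] [Field K]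
    [Field L] (f : K →+* L) {M : Matrix n n K} (h : 0 ∉ spectrum L (M.map f)) : IsUnit M := by
  rw [spectrum.zero_notMem_iff, isUnit_iff_isUnit_det, isUnit_iff_ne_zero,
    ← RingHom.mapMatrix_apply, ← RingHom.map_det, map_ne_zero] at h
  exact (isUnit_iff_isUnit_det M).2 h.isUnit

lemma sum_mul_le_sum_mul_of_ne {ι : Type*} [Fintype ι] {f g w : ι → ℝ} (i : ι)
    (hfg : ∀ j, j ≠ i → f j ≤ g j) (hw : ∀ j, 0 ≤ w j) (hwi : w i = 0) :
    ∑ j, f j * w j ≤ ∑ j, g j * w j := by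
  refine sum_le_sum fun j _ => ?_
  rcases eq_or_ne j i with rfl | hj
  · simp [hwi]
  · exact mul_le_mul_of_nonneg_right (hfg j hj) (hw j)

lemma le_sum_sum_erase {ι : Type*} [Fintype ι] [DecidableEq ι] {k : ι → ι → ℝ}
    (hk : ∀ i j, i ≠ j → 0 ≤ k i j) {i j : ι} (hij : i ≠ j) :
    k i j ≤ ∑ a, ∑ b ∈ univ.erase a, k a b :=
  calc k i j ≤ ∑ b ∈ univ.erase i, k i b :=
        single_le_sum (fun b hb => hk i b (ne_of_mem_erase hb).symm)
          (mem_erase.2 ⟨hij.symm, mem_univ j⟩)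
    _ ≤ ∑ a, ∑ b ∈ univ.erase a, k a b :=
        single_le_sum (f := fun a => ∑ b ∈ univ.erase a, k a b)
          (fun a _ => sum_nonneg fun b hb => hk a b (ne_of_mem_erase hb).symm) (mem_univ i)

section MaxwellStefan

variable {ι : Type*} [Fintype ι] {k : ι → ι → ℝ} {c : ι → ℝ}

def maxwellStefanMatrix [DecidableEq ι] (k : ι → ι → ℝ) (c : ι → ℝ) : Matrix ι ι ℝ :=
  of fun i j => (if i = j then ∑ l, k i l * c l else 0) - c i * k i j

lemma maxwellStefanMatrix_map_mulVec_apply [DecidableEq ι] (y : ι → ℂ) (i : ι) :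
    ((maxwellStefanMatrix k c).map Complex.ofReal *ᵥ y) i
      = ∑ j, (k i j : ℂ) * (c j * y i - c i * y j) := by
  simp only [mulVec, dotProduct, map_apply, maxwellStefanMatrix, of_apply, Complex.ofReal_sub,
    apply_ite Complex.ofReal, Complex.ofReal_zero, sub_mul, ite_mul, zero_mul, sum_ite_eq,
    mem_univ, if_true, sum_sub_distrib, mul_sub, Complex.ofReal_sum, sum_mul, Complex.ofReal_mul]
  congr 1 <;> exact sum_congr rfl fun j _ => by ring

lemma sum_maxwellStefanMatrix_map_mulVec [DecidableEq ι] (hsymm : ∀ i j, k i j = k j i)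
    (y : ι → ℂ) : ∑ i, ((maxwellStefanMatrix k c).map Complex.ofReal *ᵥ y) i = 0 := by
  simp only [maxwellStefanMatrix_map_mulVec_apply, mul_sub, sum_sub_distrib, sub_eq_zero]
  rw [sum_comm]
  exact sum_congr rfl fun i _ => sum_congr rfl fun j _ => by rw [hsymm]

def weightedMass (c : ι → ℝ) (x : ι → ℂ) : ℝ := ∑ i, c i * Complex.normSq (x i)

def dirichletEnergy (k : ι → ι → ℝ) (c : ι → ℝ) (x : ι → ℂ) : ℝ :=
  ∑ i, ∑ j, k i j * (c i * c j * Complex.normSq (x i - x j))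

lemma two_mul_sum_conj_mul_row_eq_dirichletEnergy (hsymm : ∀ i j, k i j = k j i) (x : ι → ℂ) :
    2 * ∑ i, conj (x i) * ∑ j, (k i j : ℂ) * (c j * (c i * x i) - c i * (c j * x j))
      = dirichletEnergy k c x := by
  set S := ∑ i, ∑ j, (k i j : ℂ) * c i * c j * (conj (x i) * (x i - x j))
  have hS : ∑ i, conj (x i) * ∑ j, (k i j : ℂ) * (c j * (c i * x i) - c i * (c j * x j)) = S :=
    sum_congr rfl fun i _ => by rw [mul_sum]; exact sum_congr rfl fun j _ => by ring
  have hswap : S = ∑ i, ∑ j, (k i j : ℂ) * c i * c j * (conj (x j) * (x j - x i)) := by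
    rw [sum_comm]
    exact sum_congr rfl fun i _ => sum_congr rfl fun j _ => by rw [hsymm]; ring
  rw [hS, two_mul]
  nth_rewrite 2 [hswap]
  rw [dirichletEnergy, ← sum_add_distrib]
  push_cast
  refine sum_congr rfl fun i _ => ?_
  rw [← sum_add_distrib]
  refine sum_congr rfl fun j _ => ?_
  rw [← Complex.mul_conj, map_sub]
  ring

lemma sum_sum_mul_normSq_sub_of_sum_eq_zero {x : ι → ℂ} (hx : ∑ i, (c i : ℂ) * x i = 0) :
    ∑ i, ∑ j, c i * c j * Complex.normSq (x i - x j) = 2 * (∑ i, c i) * weightedMass c x := by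
  have hcross : ∑ i, ∑ j, c i * c j * (x i * conj (x j)).re = 0 := by
    have h := congrArg Complex.re (congrArg (· * conj (∑ j, (c j : ℂ) * x j)) hx)
    simp only [zero_mul, Complex.zero_re, map_sum, map_mul, Complex.conj_ofReal, sum_mul,
      mul_sum, Complex.re_sum, sum_const_zero] at h
    rw [← h, sum_comm]
    exact sum_congr rfl fun i _ => sum_congr rfl fun j _ => by
      rw [show (c j : ℂ) * x j * ((c i : ℂ) * conj (x i))
          = ((c j * c i : ℝ) : ℂ) * (x j * conj (x i)) by push_cast; ring, Complex.re_ofReal_mul]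
  have hdiag : ∑ i, ∑ j, c i * c j * Complex.normSq (x i) = (∑ i, c i) * weightedMass c x := by
    rw [weightedMass, sum_comm, sum_mul]
    exact sum_congr rfl fun j _ => by rw [mul_sum]; exact sum_congr rfl fun i _ => by ring
  have hdiag' : ∑ i, ∑ j, c i * c j * Complex.normSq (x j) = (∑ i, c i) * weightedMass c x := by
    rw [weightedMass, sum_mul]
    exact sum_congr rfl fun i _ => by rw [mul_sum]; exact sum_congr rfl fun j _ => by ring
  have hcross' : ∑ i, ∑ j, c i * c j * (2 * (x i * conj (x j)).re) = 0 := by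
    simp only [mul_left_comm _ (2 : ℝ), ← mul_sum, hcross, mul_zero]
  simp only [Complex.normSq_sub, mul_sub, mul_add, sum_sub_distrib, sum_add_distrib]
  rw [hdiag, hdiag', hcross']
  ring

lemma sum_sum_mul_le_sum_sum_mul_of_ne {f g w : ι → ι → ℝ} (hfg : ∀ i j, i ≠ j → f i j ≤ g i j)
    (hw : ∀ i j, 0 ≤ w i j) (hw_diag : ∀ i, w i i = 0) :
    ∑ i, ∑ j, f i j * w i j ≤ ∑ i, ∑ j, g i j * w i j :=
  sum_le_sum fun i _ => sum_mul_le_sum_mul_of_ne i (fun j hj => hfg i j hj.symm) (hw i) (hw_diag i)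

variable {d D : ℝ} {μ : ℂ}

lemma maxwellStefan_eigenvalue_bounds_of_conc_eq_zero [DecidableEq ι] (hc : ∀ i, 0 ≤ c i)
    (hd : ∀ i j, i ≠ j → d ≤ k i j) (hD : ∀ i j, i ≠ j → k i j ≤ D) {y : ι → ℂ}
    (heig : (maxwellStefanMatrix k c).map Complex.ofReal *ᵥ y = μ • y) {i : ι} (hci : c i = 0)
    (hyi : y i ≠ 0) :
    μ.im = 0 ∧ d * ∑ j, c j ≤ μ.re ∧ μ.re ≤ D * ∑ j, c j := by
  have hrow := congrFun heig i
  simp only [maxwellStefanMatrix_map_mulVec_apply, hci, Complex.ofReal_zero, zero_mul, sub_zero,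
    Pi.smul_apply, smul_eq_mul, ← mul_assoc, ← sum_mul] at hrow
  have hμ : μ = ((∑ j, k i j * c j : ℝ) : ℂ) := by
    push_cast
    exact (mul_right_cancel₀ hyi hrow).symm
  rw [hμ, Complex.ofReal_im, Complex.ofReal_re, mul_sum, mul_sum]
  exact ⟨rfl, sum_mul_le_sum_mul_of_ne i (fun j hj => hd i j hj.symm) hc hci,
    sum_mul_le_sum_mul_of_ne i (fun j hj => hD i j hj.symm) hc hci⟩

lemma weightedMass_pos (hc : ∀ i, 0 ≤ c i) {x : ι → ℂ} (hne : ∃ i, (c i : ℂ) * x i ≠ 0) :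
    0 < weightedMass c x := by
  obtain ⟨i, hi⟩ := hne
  refine sum_pos' (fun j _ => mul_nonneg (hc j) (Complex.normSq_nonneg _)) ⟨i, mem_univ i, ?_⟩
  exact mul_pos ((hc i).lt_of_ne (by rintro h; simp [← h] at hi))
    (Complex.normSq_pos.2 (right_ne_zero_of_mul hi))

lemma two_mul_eigenvalue_mul_weightedMass [DecidableEq ι] (hsymm : ∀ i j, k i j = k j i)
    {x : ι → ℂ} (heig : (maxwellStefanMatrix k c).map Complex.ofReal *ᵥ (fun i => (c i : ℂ) * x i)
      = μ • fun i => (c i : ℂ) * x i) :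
    2 * μ * weightedMass c x = dirichletEnergy k c x := by
  have hrow : ∀ i, ∑ j, (k i j : ℂ) * (c j * (c i * x i) - c i * (c j * x j))
      = μ * (c i * x i) := fun i => by
    simpa only [maxwellStefanMatrix_map_mulVec_apply, Pi.smul_apply, smul_eq_mul]
      using congrFun heig i
  rw [← two_mul_sum_conj_mul_row_eq_dirichletEnergy hsymm x, weightedMass]
  simp only [hrow]
  push_cast
  rw [mul_assoc, mul_sum]
  congr 1
  refine sum_congr rfl fun i _ => ?_
  rw [← Complex.mul_conj]
  ring

lemma maxwellStefan_eigenvalue_bounds_of_eq_mul [DecidableEq ι] (hsymm : ∀ i j, k i j = k j i)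
    (hc : ∀ i, 0 ≤ c i) (hd : ∀ i j, i ≠ j → d ≤ k i j) (hD : ∀ i j, i ≠ j → k i j ≤ D)
    {x : ι → ℂ} (hne : ∃ i, (c i : ℂ) * x i ≠ 0) (hsum : ∑ i, (c i : ℂ) * x i = 0)
    (heig : (maxwellStefanMatrix k c).map Complex.ofReal *ᵥ (fun i => (c i : ℂ) * x i)
      = μ • fun i => (c i : ℂ) * x i) :
    μ.im = 0 ∧ d * ∑ j, c j ≤ μ.re ∧ μ.re ≤ D * ∑ j, c j := by
  set T := weightedMass c x
  set R := dirichletEnergy k c x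
  have hT : 0 < T := weightedMass_pos hc hne
  have hμ : μ = ((R / (2 * T) : ℝ) : ℂ) := by
    rw [Complex.ofReal_div, eq_div_iff (by norm_cast; positivity),
      ← two_mul_eigenvalue_mul_weightedMass hsymm heig]
    push_cast
    ring
  have hpair : ∀ i j, 0 ≤ c i * c j * Complex.normSq (x i - x j) := fun i j =>
    mul_nonneg (mul_nonneg (hc i) (hc j)) (Complex.normSq_nonneg _)
  have hdiag : ∀ i, c i * c i * Complex.normSq (x i - x i) = 0 := by simp
  have hvar := sum_sum_mul_normSq_sub_of_sum_eq_zero hsum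
  have hlow : d * (2 * (∑ j, c j) * T) ≤ R := by
    rw [← hvar, mul_sum]
    simp only [mul_sum]
    exact sum_sum_mul_le_sum_sum_mul_of_ne (f := fun _ _ => d) hd hpair hdiag
  have hup : R ≤ D * (2 * (∑ j, c j) * T) := by
    rw [← hvar, mul_sum]
    simp only [mul_sum]
    exact sum_sum_mul_le_sum_sum_mul_of_ne (g := fun _ _ => D) hD hpair hdiag
  rw [hμ, Complex.ofReal_im, Complex.ofReal_re, le_div_iff₀ (by positivity),
    div_le_iff₀ (by positivity)]
  exact ⟨rfl, by linarith, by linarith⟩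

theorem maxwellStefan_eigenvalue_bounds [DecidableEq ι] (hsymm : ∀ i j, k i j = k j i)
    (hc : ∀ i, 0 ≤ c i) (hd : ∀ i j, i ≠ j → d ≤ k i j) (hD : ∀ i j, i ≠ j → k i j ≤ D)
    {y : ι → ℂ} (hy : y ≠ 0) (hsum : ∑ i, y i = 0)
    (heig : (maxwellStefanMatrix k c).map Complex.ofReal *ᵥ y = μ • y) :
    μ.im = 0 ∧ d * ∑ j, c j ≤ μ.re ∧ μ.re ≤ D * ∑ j, c j := by
  by_cases h : ∃ i, c i = 0 ∧ y i ≠ 0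
  · obtain ⟨i, hci, hyi⟩ := h
    exact maxwellStefan_eigenvalue_bounds_of_conc_eq_zero hc hd hD heig hci hyi
  · push Not at h
    -- `y i / c i` is the junk value `0` exactly where `y i = 0` anyway
    have hy_eq : (fun i => (c i : ℂ) * (y i / c i)) = y := funext fun i => by
      by_cases hci : c i = 0
      · simp [hci, h i hci]
      · exact mul_div_cancel₀ _ (Complex.ofReal_ne_zero.2 hci)
    rw [← hy_eq] at hy hsum heig
    exact maxwellStefan_eigenvalue_bounds_of_eq_mul hsymm hc hd hD (Function.ne_iff.1 hy) hsum heig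

end MaxwellStefan

section Reduction

variable {m : ℕ} {M : Type*} [AddCommGroup M]

def sumZeroExtend (x : Fin m → M) : Fin (m + 1) → M := Fin.snoc x (-∑ i, x i)

@[simp]
lemma sumZeroExtend_castSucc (x : Fin m → M) (i : Fin m) : sumZeroExtend x i.castSucc = x i :=
  Fin.snoc_castSucc ..

lemma sum_sumZeroExtend (x : Fin m → M) : ∑ i, sumZeroExtend x i = 0 := by
  simp [Fin.sum_univ_castSucc, sumZeroExtend]

lemma sumZeroExtend_ne_zero {x : Fin m → M} (hx : x ≠ 0) : sumZeroExtend x ≠ 0 := by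
  obtain ⟨i, hi⟩ := Function.ne_iff.1 hx
  exact Function.ne_iff.2 ⟨i.castSucc, by simpa using hi⟩

lemma sumZeroExtend_smul {S : Type*} [Monoid S] [DistribMulAction S M] (s : S) (x : Fin m → M) :
    sumZeroExtend (s • x) = s • sumZeroExtend x := by
  ext i
  induction i using Fin.lastCases with
  | last => simp [sumZeroExtend, smul_sum]
  | cast i => simp

lemma eq_sumZeroExtend_of_sum_eq_zero {y : Fin (m + 1) → M} (hy : ∑ i, y i = 0) :
    y = sumZeroExtend fun i => y i.castSucc := by
  ext i
  induction i using Fin.lastCases with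
  | last =>
    rw [Fin.sum_univ_castSucc, add_eq_zero_iff_eq_neg'] at hy
    simp [sumZeroExtend, hy]
  | cast i => simp

lemma MSmatF0_apply_eq_sub (k : Fin (m + 1) → Fin (m + 1) → ℝ) (c : Fin (m + 1) → ℝ)
    (i j : Fin m) :
    MSmatF0 m k c i j = maxwellStefanMatrix k c i.castSucc j.castSucc
      - maxwellStefanMatrix k c i.castSucc (Fin.last m) := by
  rcases eq_or_ne i j with rfl | hij
  · simp only [MSmatF0, maxwellStefanMatrix, of_apply, if_true, Fin.castSucc_ne_last, if_false]
    rw [sum_erase_eq_sub (mem_univ i), Fin.sum_univ_castSucc, Fin.sum_univ_castSucc]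
    simp only [sub_mul, sum_sub_distrib, ← mul_sum]
    ring
  · simp [MSmatF0, maxwellStefanMatrix, hij, Fin.castSucc_ne_last]
    ring

lemma maxwellStefanMatrix_map_mulVec_sumZeroExtend {k : Fin (m + 1) → Fin (m + 1) → ℝ}
    (hsymm : ∀ i j, k i j = k j i) (c : Fin (m + 1) → ℝ) (x : Fin m → ℂ) :
    (maxwellStefanMatrix k c).map Complex.ofReal *ᵥ sumZeroExtend x
      = sumZeroExtend ((MSmatF0 m k c).map Complex.ofReal *ᵥ x) := by
  rw [eq_sumZeroExtend_of_sum_eq_zero (sum_maxwellStefanMatrix_map_mulVec hsymm _)]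
  congr 1
  ext i
  simp only [mulVec, dotProduct, map_apply, Fin.sum_univ_castSucc, sumZeroExtend_castSucc,
    MSmatF0_apply_eq_sub, Complex.ofReal_sub, sub_mul, sum_sub_distrib]
  simp [sumZeroExtend, mul_sum]
  ring

end Reduction

theorem F0_invertible_and_spectrum_general
    (m : ℕ)
    (k : Fin (m + 1) → Fin (m + 1) → ℝ)
    (hsymm : ∀ i j, k i j = k j i)
    (hkpos : ∀ i j, i ≠ j → 0 < k i j)
    (c : Fin (m + 1) → ℝ)
    (hc : ∀ i, 0 ≤ c i)
    (cmin cmax : ℝ)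
    (hcmin : 0 < cmin)
    (hmin : cmin ≤ ∑ i, c i)
    (hmax : ∑ i, c i ≤ cmax)
    (δ₀ : ℝ)
    (hδ₀ : IsLeast {x : ℝ | ∃ i j : Fin (m + 1), i ≠ j ∧ k i j = x} δ₀)
    (δ η : ℝ)
    (hδ : δ = cmin * δ₀)
    (hη : η = 2 * cmax * ∑ i : Fin (m + 1), ∑ j ∈ Finset.univ.erase i, k i j) :
    IsUnit (MSmatF0 m k c)
      ∧ ∀ μ ∈ spectrum ℂ ((MSmatF0 m k c).map Complex.ofReal),
          μ.im = 0 ∧ δ ≤ μ.re ∧ μ.re < η := by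
  obtain ⟨⟨i₀, j₀, hij₀, hkδ₀⟩, hδ₀_le⟩ := hδ₀
  have hδ₀_pos : 0 < δ₀ := hkδ₀ ▸ hkpos i₀ j₀ hij₀
  have hδ_pos : 0 < δ := hδ ▸ mul_pos hcmin hδ₀_pos
  set K := ∑ i, ∑ j ∈ univ.erase i, k i j
  have hk_le : ∀ i j, i ≠ j → k i j ≤ K := fun i j h =>
    le_sum_sum_erase (fun i j h => (hkpos i j h).le) h
  have hK_pos : 0 < K := hδ₀_pos.trans_le (hkδ₀ ▸ hk_le i₀ j₀ hij₀)
  have hspec : ∀ μ ∈ spectrum ℂ ((MSmatF0 m k c).map Complex.ofReal),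
      μ.im = 0 ∧ δ ≤ μ.re ∧ μ.re < η := by
    intro μ hμ
    obtain ⟨x, hx0, hx⟩ := exists_mulVec_eq_smul_of_mem_spectrum hμ
    obtain ⟨him, hlow, hup⟩ := maxwellStefan_eigenvalue_bounds hsymm hc
      (fun i j h => hδ₀_le ⟨i, j, h, rfl⟩) hk_le (sumZeroExtend_ne_zero hx0)
      (sum_sumZeroExtend x)
      (by rw [maxwellStefanMatrix_map_mulVec_sumZeroExtend hsymm, hx, sumZeroExtend_smul])
    refine ⟨him, ?_, ?_⟩
    · calc δ = cmin * δ₀ := hδ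
        _ ≤ δ₀ * ∑ i, c i := by rw [mul_comm]; gcongr
        _ ≤ μ.re := hlow
    · calc μ.re ≤ K * ∑ i, c i := hup
        _ ≤ K * cmax := by gcongr
        _ < 2 * cmax * K := by nlinarith [hcmin.trans_le (hmin.trans hmax)]
        _ = η := hη.symm
  refine ⟨isUnit_of_zero_notMem_spectrum_map Complex.ofRealHom fun h0 => ?_, hspec⟩
  exact (hspec 0 h0).2.1.not_gt (by simpa using hδ_pos)

/-- `F₀` is invertible, and every complex eigenvalue of `F₀`
is real and lies in `[δ, η)`, where `δ = c_min · min_{i ≠ j} k i j` and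
`η = 2 c_max ∑_{i ≠ j} k i j`. -/
theorem F0_invertible_and_spectrum
    (m : ℕ) (hm : 1 ≤ m)
    (k : Fin (m + 1) → Fin (m + 1) → ℝ)
    (hsymm : ∀ i j, k i j = k j i)
    (hkpos : ∀ i j, i ≠ j → 0 < k i j)
    (c : Fin (m + 1) → ℝ)
    (hc : ∀ i, 0 ≤ c i)
    (cmin cmax : ℝ)
    (hcmin : 0 < cmin)
    (hmin : cmin ≤ ∑ i, c i)
    (hmax : ∑ i, c i ≤ cmax)
    (δ₀ : ℝ)
    (hδ₀ : IsLeast {x : ℝ | ∃ i j : Fin (m + 1), i ≠ j ∧ k i j = x} δ₀)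
    (δ η : ℝ)
    (hδ : δ = cmin * δ₀)
    (hη : η = 2 * cmax * ∑ i : Fin (m + 1), ∑ j ∈ Finset.univ.erase i, k i j) :
    IsUnit (MSmatF0 m k c)
      ∧ ∀ μ ∈ spectrum ℂ ((MSmatF0 m k c).map Complex.ofReal),
          μ.im = 0 ∧ δ ≤ μ.re ∧ μ.re < η :=
  F0_invertible_and_spectrum_general m k hsymm hkpos c hc cmin cmax hcmin hmin hmax δ₀ hδ₀ δ η hδ hη
end

section
/- Algebraic converse of the flux inversion: let d ≥ 1, let J′, D′ ∈ ℝ^{(n−1)×d}, g ∈ ℝ^d and α ∈ ℝ, and suppose F_0 J′ = −(D′ + α c̃′ ⊗ g). Define J ∈ ℝ^{n×d} by taking its first n−1 rows equal to those of J′ and its n-th row equal to −α g − ∑_{i=1}^{n−1} J′_i, and define D ∈ ℝ^{n×d} by taking its first n−1 rows equal to those of D′ and its n-th row equal to −∑_{i=1}^{n−1} D′_i. Then F J = D. -/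
/-- The vector `c̃′` with entries `(c̃′) i = k i n * c i`, `i = 1, …, n - 1`. -/
def MSctil (m : ℕ) (k : Fin (m + 1) → Fin (m + 1) → ℝ)
    (c : Fin (m + 1) → ℝ) : Fin m → ℝ :=
  fun i => k i.castSucc (Fin.last m) * c i.castSucc

open Matrix

theorem Matrix.one_vecMul_mul_eq_zero {ι κ ν R : Type*} [Fintype ι] [Fintype κ] [CommSemiring R]
    {A : Matrix ι κ R} (hA : 1 ᵥ* A = 0) (B : Matrix κ ν R) : 1 ᵥ* (A * B) = 0 := by
  rw [← vecMul_vecMul, hA, zero_vecMul]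

theorem Matrix.apply_last_eq_neg_sum_of_one_vecMul_eq_zero {m : ℕ} {ν R : Type*} [Ring R]
    {M : Matrix (Fin (m + 1)) ν R} (hM : 1 ᵥ* M = 0) (j : ν) :
    M (Fin.last m) j = -∑ i : Fin m, M i.castSucc j := by
  have h := congrFun hM j
  simp only [vecMul, dotProduct, Pi.one_apply, one_mul, Pi.zero_apply,
    Fin.sum_univ_castSucc] at h
  exact eq_neg_of_add_eq_zero_right h

section MaxwellStefan

variable {m : ℕ} (k : Fin (m + 1) → Fin (m + 1) → ℝ) (c : Fin (m + 1) → ℝ)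

theorem MSmatF_castSucc_castSucc (i r : Fin m) :
    MSmatF m k c i.castSucc r.castSucc = -MSmatF0 m k c i r + MSctil m k c i := by
  simp only [MSmatF, MSmatF0, MSctil, of_apply, Fin.castSucc_inj]
  split_ifs with hir
  · subst hir
    rw [Finset.sum_erase_eq_sub (Finset.mem_univ _), Finset.sum_erase_eq_sub (Finset.mem_univ _),
      Fin.sum_univ_castSucc, Fin.sum_univ_castSucc (f := c)]
    simp only [sub_mul, Finset.sum_sub_distrib, ← Finset.mul_sum]
    ring
  · ring

theorem MSmatF_castSucc_last (i : Fin m) :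
    MSmatF m k c i.castSucc (Fin.last m) = MSctil m k c i := by
  simp [MSmatF, MSctil, (Fin.castSucc_lt_last i).ne]

theorem one_vecMul_MSmatF (hsymm : ∀ i j, k i j = k j i) : 1 ᵥ* MSmatF m k c = 0 := by
  ext r
  simp only [vecMul, dotProduct, Pi.one_apply, one_mul, Pi.zero_apply]
  rw [← Finset.add_sum_erase _ _ (Finset.mem_univ r)]
  have hoff : ∑ i ∈ Finset.univ.erase r, MSmatF m k c i r =
      ∑ i ∈ Finset.univ.erase r, k r i * c i :=
    Finset.sum_congr rfl fun i hi => by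
      simp [MSmatF, Finset.ne_of_mem_erase hi, hsymm i r]
  rw [hoff, MSmatF, of_apply, if_pos rfl, neg_add_cancel]

theorem MSmatF_mul_apply_castSucc {d : ℕ} (J' : Matrix (Fin m) (Fin d) ℝ) (g : Fin d → ℝ)
    (α : ℝ) (i : Fin m) (j : Fin d) :
    (MSmatF m k c * (Matrix.of fun i j =>
        Fin.lastCases (-(α * g j) - ∑ i' : Fin m, J' i' j) (fun i' => J' i' j) i :
          Matrix (Fin (m + 1)) (Fin d) ℝ)) i.castSucc j =
      -(MSmatF0 m k c * J' + α • vecMulVec (MSctil m k c) g) i j := by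
  simp only [mul_apply, Fin.sum_univ_castSucc, of_apply, Fin.lastCases_castSucc,
    Fin.lastCases_last, MSmatF_castSucc_castSucc, MSmatF_castSucc_last, Matrix.add_apply,
    Matrix.smul_apply, vecMulVec_apply, smul_eq_mul, add_mul, Finset.sum_add_distrib, neg_mul,
    Finset.sum_neg_distrib, ← Finset.mul_sum]
  ring

end MaxwellStefan

theorem flux_gradient_inversion_converse_general
    (m : ℕ)
    (k : Fin (m + 1) → Fin (m + 1) → ℝ)
    (hsymm : ∀ i j, k i j = k j i)
    (c : Fin (m + 1) → ℝ)
    (d : ℕ)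
    (J' D' : Matrix (Fin m) (Fin d) ℝ)
    (g : Fin d → ℝ) (α : ℝ)
    (hF0J' : MSmatF0 m k c * J' = -(D' + α • Matrix.vecMulVec (MSctil m k c) g))
    (J D : Matrix (Fin (m + 1)) (Fin d) ℝ)
    (hJ : J = Matrix.of fun i j =>
      Fin.lastCases (-(α * g j) - ∑ i' : Fin m, J' i' j) (fun i' => J' i' j) i)
    (hD : D = Matrix.of fun i j =>
      Fin.lastCases (-∑ i' : Fin m, D' i' j) (fun i' => D' i' j) i) :
    MSmatF m k c * J = D := by
  have hD' : MSmatF0 m k c * J' + α • vecMulVec (MSctil m k c) g = -D' := by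
    rw [hF0J']; abel
  have htop (i : Fin m) (j : Fin d) : (MSmatF m k c * J) i.castSucc j = D' i j := by
    rw [hJ, MSmatF_mul_apply_castSucc, hD', Matrix.neg_apply, neg_neg]
  ext i j
  induction i using Fin.lastCases with
  | cast i => simp [htop, hD]
  | last =>
    rw [apply_last_eq_neg_sum_of_one_vecMul_eq_zero
      (one_vecMul_mul_eq_zero (one_vecMul_MSmatF k c hsymm) J)]
    simp [htop, hD]

/-- algebraic converse of the flux inversion: if
`F₀ J′ = -(D′ + α c̃′ ⊗ g)`, and `J` (resp. `D`) is the `n × d` matrix whose first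
`n - 1` rows are those of `J′` (resp. `D′`) and whose `n`-th row is
`-α g - ∑_{i ≤ n-1} J′ i` (resp. `-∑_{i ≤ n-1} D′ i`), then `F J = D`. -/
theorem flux_gradient_inversion_converse
    (m : ℕ) (hm : 1 ≤ m)
    (k : Fin (m + 1) → Fin (m + 1) → ℝ)
    (hsymm : ∀ i j, k i j = k j i)
    (hkpos : ∀ i j, i ≠ j → 0 < k i j)
    (c : Fin (m + 1) → ℝ)
    (hc : ∀ i, 0 ≤ c i)
    (d : ℕ) (hd : 1 ≤ d)
    (J' D' : Matrix (Fin m) (Fin d) ℝ)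
    (g : Fin d → ℝ) (α : ℝ)
    (hF0J' : MSmatF0 m k c * J' = -(D' + α • Matrix.vecMulVec (MSctil m k c) g))
    (J D : Matrix (Fin (m + 1)) (Fin d) ℝ)
    (hJ : J = Matrix.of fun i j =>
      Fin.lastCases (-(α * g j) - ∑ i' : Fin m, J' i' j) (fun i' => J' i' j) i)
    (hD : D = Matrix.of fun i j =>
      Fin.lastCases (-∑ i' : Fin m, D' i' j) (fun i' => D' i' j) i) :
    MSmatF m k c * J = D :=
  flux_gradient_inversion_converse_general m k hsymm c d J' D' g α hF0J' J D hJ hD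
end

section
/- Reduced flux formula (pointwise form of equation (6)): let Ω ⊂ ℝ^d be open, let c_1,…,c_n : Ω → ℝ be nonnegative differentiable functions with 0 < c_min ≤ ∑_{i=1}^n c_i(x) ≤ c_max on Ω, let T : Ω → ℝ be differentiable, let α ∈ ℝ, and let J_1,…,J_n : Ω → ℝ^d. Suppose that at a point x ∈ Ω the flux–gradient relations ∇(c_i T)(x) = −∑_{j≠i} k_{ij} (c_j(x) J_i(x) − c_i(x) J_j(x)) hold for i = 1,…,n, together with the closure relation ∑_{i=1}^n J_i(x) = −α ∇c_tot(x), where c_tot := ∑_{i=1}^n c_i. Then, with J′ = (J_1,…,J_{n−1})^⊤ and c′ = (c_1,…,c_{n−1})^⊤, one has at x: J′ = −T F_0^{−1} ∇c′ − F_0^{−1} (c′ ⊗ ∇T) − α F_0^{−1} (c̃′ ⊗ ∇c_tot), where ∇c′ is the (n−1)×d matrix with rows ∇c_i and (v ⊗ w)_{ij} = v_i w_j. -/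
noncomputable def pderiv' (d : ℕ) (f : (Fin d → ℝ) → ℝ) (l : Fin d)
    (x : Fin d → ℝ) : ℝ :=
  fderiv ℝ f x (Pi.single l 1)

section MaxwellStefan

variable {ι : Type*} [Fintype ι] (k : ι → ι → ℝ)

def maxwellStefan (a w : ι → ℝ) (i : ι) : ℝ :=
  ∑ j, k i j * (a j * w i - a i * w j)

lemma sum_erase_eq_maxwellStefan [DecidableEq ι] (a w : ι → ℝ) (i : ι) :
    ∑ j ∈ Finset.univ.erase i, k i j * (a j * w i - a i * w j) = maxwellStefan k a w i :=
  Finset.sum_erase _ (by ring)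

variable {k}

lemma sum_maxwellStefan (hk : ∀ i j, k i j = k j i) (a w : ι → ℝ) :
    ∑ i, maxwellStefan k a w i = 0 := by
  have hswap : ∑ i, maxwellStefan k a w i = ∑ i, ∑ j, k j i * (a i * w j - a j * w i) :=
    Finset.sum_comm
  simp only [maxwellStefan] at hswap ⊢
  have hanti : ∑ i, ∑ j, k j i * (a i * w j - a j * w i)
      = -∑ i, ∑ j, k i j * (a j * w i - a i * w j) := by
    simp only [← Finset.sum_neg_distrib]
    exact Finset.sum_congr rfl fun i _ => Finset.sum_congr rfl fun j _ => by rw [hk j i]; ring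
  linarith

lemma two_mul_sum_mul_maxwellStefan (hk : ∀ i j, k i j = k j i) (a r : ι → ℝ) :
    2 * ∑ i, r i * maxwellStefan k a (r * a) i
      = ∑ i, ∑ j, k i j * (a i * a j) * (r i - r j) ^ 2 := by
  have hswap : ∑ i, r i * maxwellStefan k a (r * a) i
      = ∑ i, ∑ j, r j * (k j i * (a i * (r j * a j) - a j * (r i * a i))) := by
    simp only [maxwellStefan, Finset.mul_sum]
    exact Finset.sum_comm
  rw [two_mul]
  nth_rewrite 2 [hswap]
  simp only [maxwellStefan, Finset.mul_sum, ← Finset.sum_add_distrib, Pi.mul_apply]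
  exact Finset.sum_congr rfl fun i _ => Finset.sum_congr rfl fun j _ => by rw [hk j i]; ring

lemma eq_zero_of_maxwellStefan_eq_zero (hkpos : ∀ i j, i ≠ j → 0 < k i j) {a w : ι → ℝ}
    (ha : 0 ≤ a) (hw : maxwellStefan k a w = 0)
    {p : ι} (hp : 0 < a p) {i : ι} (hi : a i = 0) : w i = 0 := by
  have hQ : maxwellStefan k a w i = (∑ j, k i j * a j) * w i := by
    simp only [maxwellStefan, hi, Finset.sum_mul]
    exact Finset.sum_congr rfl fun j _ => by ring
  have hcoef : 0 < ∑ j, k i j * a j := by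
    refine Finset.sum_pos' (fun j _ => ?_) ⟨p, Finset.mem_univ p, ?_⟩
    · rcases eq_or_ne i j with rfl | hij
      · simp [hi]
      · exact mul_nonneg (hkpos i j hij).le (ha j)
    · exact mul_pos (hkpos i p (by rintro rfl; simp [hi] at hp)) hp
  rw [hw, Pi.zero_apply] at hQ
  exact (mul_eq_zero.1 hQ.symm).resolve_left hcoef.ne'

lemma exists_eq_smul_of_maxwellStefan_eq_zero (hk : ∀ i j, k i j = k j i)
    (hkpos : ∀ i j, i ≠ j → 0 < k i j) {a w : ι → ℝ} (ha : 0 ≤ a) {p : ι} (hp : 0 < a p)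
    (hw : maxwellStefan k a w = 0) : ∃ t : ℝ, w = t • a := by
  -- junk division where `a` vanishes is harmless, since `w` vanishes there too
  set r : ι → ℝ := fun i => w i / a i
  have hwr : w = r * a := by
    funext i
    rcases (ha i).eq_or_lt with hi | hi
    · simp [← hi, eq_zero_of_maxwellStefan_eq_zero hkpos ha hw hp hi.symm]
    · exact (div_mul_cancel₀ (w i) hi.ne').symm
  have hquad : ∑ i, ∑ j, k i j * (a i * a j) * (r i - r j) ^ 2 = 0 := by
    rw [← two_mul_sum_mul_maxwellStefan hk, ← hwr, hw]
    simp
  have hterm_nonneg : ∀ i j, 0 ≤ k i j * (a i * a j) * (r i - r j) ^ 2 := by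
    intro i j
    rcases eq_or_ne i j with rfl | hij
    · simp
    · exact mul_nonneg (mul_nonneg (hkpos i j hij).le (mul_nonneg (ha i) (ha j))) (sq_nonneg _)
  have hconst : ∀ i, 0 < a i → r i = r p := by
    intro i hi
    rcases eq_or_ne i p with rfl | hip
    · rfl
    · have hterm : k i p * (a i * a p) * (r i - r p) ^ 2 = 0 :=
        (Finset.sum_eq_zero_iff_of_nonneg fun j _ => hterm_nonneg i j).1
          ((Finset.sum_eq_zero_iff_of_nonneg fun i _ =>
            Finset.sum_nonneg fun j _ => hterm_nonneg i j).1 hquad i (Finset.mem_univ i))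
          p (Finset.mem_univ p)
      have hpos : 0 < k i p * (a i * a p) := mul_pos (hkpos i p hip) (mul_pos hi hp)
      simpa [hpos.ne', sub_eq_zero] using hterm
  refine ⟨r p, funext fun i => ?_⟩
  rcases (ha i).eq_or_lt with hi | hi
  · simp [← hi, eq_zero_of_maxwellStefan_eq_zero hkpos ha hw hp hi.symm]
  · rw [hwr, Pi.mul_apply, hconst i hi, Pi.smul_apply, smul_eq_mul]

end MaxwellStefan

section ReducedMatrix

open Matrix

variable {m : ℕ} (k : Fin (m + 1) → Fin (m + 1) → ℝ)

lemma MSmatF0_apply (a : Fin (m + 1) → ℝ) (i j : Fin m) :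
    MSmatF0 m k a i j
      = (if i = j then
          ∑ j' : Fin m, (k i.castSucc j'.castSucc - k i.castSucc (Fin.last m)) * a j'.castSucc
            + (∑ r, a r) * k i.castSucc (Fin.last m)
        else 0)
        - (k i.castSucc j.castSucc - k i.castSucc (Fin.last m)) * a i.castSucc := by
  by_cases hij : i = j
  · subst hij
    simp only [MSmatF0, Finset.mem_univ, Finset.sum_erase_eq_sub, of_apply, ↓reduceIte]
    ring
  · simp [MSmatF0, hij]

lemma MSmatF0_mulVec (a u : Fin (m + 1) → ℝ) (i : Fin m) :
    (MSmatF0 m k a *ᵥ fun j => u j.castSucc) i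
      = maxwellStefan k a u i.castSucc + k i.castSucc (Fin.last m) * a i.castSucc * ∑ j, u j := by
  simp only [Matrix.mulVec, dotProduct, MSmatF0_apply, sub_mul, ite_mul, zero_mul,
    Finset.sum_sub_distrib, Finset.sum_ite_eq, Finset.mem_univ, if_true, maxwellStefan,
    Fin.sum_univ_castSucc]
  simp only [mul_add, mul_sub, Finset.mul_sum, Finset.sum_sub_distrib, mul_comm, mul_left_comm]
  ring

variable {k}

lemma isUnit_det_MSmatF0 (hk : ∀ i j, k i j = k j i) (hkpos : ∀ i j, i ≠ j → 0 < k i j)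
    {a : Fin (m + 1) → ℝ} (ha : 0 ≤ a) (hsum : 0 < ∑ r, a r) : IsUnit (MSmatF0 m k a).det := by
  rw [isUnit_iff_ne_zero, Ne, ← exists_mulVec_eq_zero_iff]
  rintro ⟨v, hv0, hv⟩
  obtain ⟨p, -, hp⟩ : ∃ p ∈ Finset.univ, (0 : ℝ) < a p :=
    Finset.exists_lt_of_sum_lt (by simpa using hsum)
  set w : Fin (m + 1) → ℝ := Fin.snoc v (-∑ j, v j)
  have hwv : (fun j : Fin m => w j.castSucc) = v := funext fun j => Fin.snoc_castSucc ..
  have hwsum : ∑ j, w j = 0 := by simp [w, Fin.sum_univ_castSucc]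
  have hMS_castSucc (i : Fin m) : maxwellStefan k a w i.castSucc = 0 := by
    simpa [hwsum, hwv, hv] using (MSmatF0_mulVec k a w i).symm
  have hMS : maxwellStefan k a w = 0 := by
    have hlast := sum_maxwellStefan hk a w
    rw [Fin.sum_univ_castSucc, Finset.sum_eq_zero fun i _ => hMS_castSucc i, zero_add] at hlast
    exact funext (Fin.lastCases hlast hMS_castSucc)
  obtain ⟨t, hwt⟩ := exists_eq_smul_of_maxwellStefan_eq_zero hk hkpos ha hp hMS
  have ht : t = 0 := by
    simpa [hwt, ← Finset.mul_sum, hsum.ne'] using hwsum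
  exact hv0 (by rw [← hwv, hwt, ht, zero_smul]; rfl)

end ReducedMatrix

lemma pderiv'_mul {d : ℕ} {f g : (Fin d → ℝ) → ℝ} {x : Fin d → ℝ}
    (hf : DifferentiableAt ℝ f x) (hg : DifferentiableAt ℝ g x) (l : Fin d) :
    pderiv' d (fun y => f y * g y) l x = f x * pderiv' d g l x + g x * pderiv' d f l x := by
  simp [pderiv', fderiv_fun_mul hf hg]

theorem reduced_flux_formula_general
    (m : ℕ)
    (k : Fin (m + 1) → Fin (m + 1) → ℝ)
    (hsymm : ∀ i j, k i j = k j i)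
    (hkpos : ∀ i j, i ≠ j → 0 < k i j)
    (d : ℕ)
    (Ω : Set (Fin d → ℝ))
    (c : Fin (m + 1) → (Fin d → ℝ) → ℝ)
    (T : (Fin d → ℝ) → ℝ)
    (α : ℝ)
    (J : Fin (m + 1) → (Fin d → ℝ) → (Fin d → ℝ))
    (cmin : ℝ) (hcmin : 0 < cmin)
    (hcnn : ∀ i, ∀ y ∈ Ω, 0 ≤ c i y)
    (hlb : ∀ y ∈ Ω, cmin ≤ ∑ i, c i y)
    (x : Fin d → ℝ) (hx : x ∈ Ω)
    (hcdiff : ∀ i, DifferentiableAt ℝ (c i) x)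
    (hTdiff : DifferentiableAt ℝ T x)
    (hflux : ∀ i : Fin (m + 1), ∀ l : Fin d,
      pderiv' d (fun y => c i y * T y) l x
        = -∑ j ∈ Finset.univ.erase i,
            k i j * (c j x * J i x l - c i x * J j x l))
    (hclos : ∀ l : Fin d,
      ∑ i, J i x l = -(α * pderiv' d (fun y => ∑ r, c r y) l x)) :
    (Matrix.of fun (i : Fin m) (l : Fin d) => J i.castSucc x l)
      = -(T x • ((MSmatF0 m k (fun r => c r x))⁻¹
            * Matrix.of (fun (i : Fin m) (l : Fin d) => pderiv' d (c i.castSucc) l x)))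
        - (MSmatF0 m k (fun r => c r x))⁻¹
            * Matrix.vecMulVec (fun i : Fin m => c i.castSucc x)
                (fun l => pderiv' d T l x)
        - α • ((MSmatF0 m k (fun r => c r x))⁻¹
            * Matrix.vecMulVec (MSctil m k (fun r => c r x))
                (fun l => pderiv' d (fun y => ∑ r, c r y) l x)) := by
  set F := MSmatF0 m k (fun r => c r x)
  have hF : IsUnit F.det :=
    isUnit_det_MSmatF0 hsymm hkpos (fun r => hcnn r x hx) (hcmin.trans_le (hlb x hx))
  have hFJ : F * Matrix.of (fun (i : Fin m) (l : Fin d) => J i.castSucc x l)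
      = -(T x • Matrix.of (fun (i : Fin m) (l : Fin d) => pderiv' d (c i.castSucc) l x))
        - Matrix.vecMulVec (fun i : Fin m => c i.castSucc x) (fun l => pderiv' d T l x)
        - α • Matrix.vecMulVec (MSctil m k (fun r => c r x))
            (fun l => pderiv' d (fun y => ∑ r, c r y) l x) := by
    ext i l
    have hMS : maxwellStefan k (c · x) (J · x l) i.castSucc
        = -(c i.castSucc x * pderiv' d T l x + T x * pderiv' d (c i.castSucc) l x) := by
      rw [← sum_erase_eq_maxwellStefan, ← pderiv'_mul (hcdiff _) hTdiff, hflux, neg_neg]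
    have hrow := MSmatF0_mulVec k (c · x) (J · x l) i
    rw [hMS, hclos] at hrow
    simp only [Matrix.mul_apply', Matrix.of_apply, Matrix.sub_apply, Matrix.neg_apply,
      Matrix.smul_apply, Matrix.vecMulVec_apply, MSctil, smul_eq_mul]
    rw [← Matrix.mulVec, hrow]
    ring
  rw [← Matrix.nonsing_inv_mul_cancel_left F (Matrix.of _) hF, hFJ]
  simp only [Matrix.mul_sub, Matrix.mul_neg, Matrix.mul_smul]

/-- reduced flux formula, pointwise form of equation (6): if at a
point `x` of the open set `Ω` the flux–gradient relations
`∇(cᵢ T) = -∑_{j ≠ i} k i j (cⱼ Jᵢ - cᵢ Jⱼ)` and the closure relation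
`∑ i, Jᵢ = -α ∇c_tot` hold, then the matrix `J′` of the first `n - 1` fluxes
satisfies `J′ = -T F₀⁻¹ ∇c′ - F₀⁻¹ (c′ ⊗ ∇T) - α F₀⁻¹ (c̃′ ⊗ ∇c_tot)`. -/
theorem reduced_flux_formula
    (m : ℕ) (hm : 1 ≤ m)
    (k : Fin (m + 1) → Fin (m + 1) → ℝ)
    (hsymm : ∀ i j, k i j = k j i)
    (hkpos : ∀ i j, i ≠ j → 0 < k i j)
    (d : ℕ) (hd : 1 ≤ d)
    (Ω : Set (Fin d → ℝ)) (hΩ : IsOpen Ω)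
    (c : Fin (m + 1) → (Fin d → ℝ) → ℝ)
    (T : (Fin d → ℝ) → ℝ)
    (α : ℝ)
    (J : Fin (m + 1) → (Fin d → ℝ) → (Fin d → ℝ))
    (cmin cmax : ℝ) (hcmin : 0 < cmin)
    (hcnn : ∀ i, ∀ y ∈ Ω, 0 ≤ c i y)
    (hlb : ∀ y ∈ Ω, cmin ≤ ∑ i, c i y)
    (hub : ∀ y ∈ Ω, ∑ i, c i y ≤ cmax)
    (x : Fin d → ℝ) (hx : x ∈ Ω)
    (hcdiff : ∀ i, DifferentiableAt ℝ (c i) x)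
    (hTdiff : DifferentiableAt ℝ T x)
    (hflux : ∀ i : Fin (m + 1), ∀ l : Fin d,
      pderiv' d (fun y => c i y * T y) l x
        = -∑ j ∈ Finset.univ.erase i,
            k i j * (c j x * J i x l - c i x * J j x l))
    (hclos : ∀ l : Fin d,
      ∑ i, J i x l = -(α * pderiv' d (fun y => ∑ r, c r y) l x)) :
    (Matrix.of fun (i : Fin m) (l : Fin d) => J i.castSucc x l)
      = -(T x • ((MSmatF0 m k (fun r => c r x))⁻¹
            * Matrix.of (fun (i : Fin m) (l : Fin d) => pderiv' d (c i.castSucc) l x)))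
        - (MSmatF0 m k (fun r => c r x))⁻¹
            * Matrix.vecMulVec (fun i : Fin m => c i.castSucc x)
                (fun l => pderiv' d T l x)
        - α • ((MSmatF0 m k (fun r => c r x))⁻¹
            * Matrix.vecMulVec (MSctil m k (fun r => c r x))
                (fun l => pderiv' d (fun y => ∑ r, c r y) l x)) :=
  reduced_flux_formula_general m k hsymm hkpos d Ω c T α J cmin hcmin hcnn hlb x hx hcdiff hTdiff
    hflux hclos
end
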